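/- arXiv:2210.17480 — 3 statements merged into one kernel-verified Lean document; each statement's English description precedes it below -/
import Mathlib

section
/- Let (X,d) be a proper geodesic Gromov hyperbolic metric space whose horofunction compactification X̄^H is equivalent to its Gromov compactification X̄^G. Let f : X → X be a non-expanding map, η ∈ ∂_G X a boundary regular fixed point of f with dilation λ_η(f), and γ : [0,+∞) → X an almost geodesic with γ(t) → η as t → +∞. Then for every p ∈ X, lim_{t→+∞} (d(p,γ(t)) − d(p,f(γ(t)))) = log λ_η(f). -/
/- Preliminary definitions: Gromov hyperbolicity, Gromov boundary (via geodesic rays),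
   dilations, boundary regular fixed points, horofunctions, backward orbits. -/

noncomputable section

open Filter Topology Metric Set

/-- The Gromov product of `x` and `y` with respect to the base point `p`. -/
def gromovProd {X : Type*} [MetricSpace X] (p x y : X) : ℝ :=
  (dist p x + dist p y - dist x y) / 2

/-- A (unit speed) geodesic ray, parametrized by `t ≥ 0`. -/
def IsGeodesicRay {X : Type*} [MetricSpace X] (γ : ℝ → X) : Prop :=
  ∀ s t : ℝ, 0 ≤ s → 0 ≤ t → dist (γ s) (γ t) = |s - t|

/-- A (unit speed) geodesic segment from `x` to `y`, parametrized on `[0, dist x y]`. -/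
def IsGeodesicFromTo {X : Type*} [MetricSpace X] (γ : ℝ → X) (x y : X) : Prop :=
  γ 0 = x ∧ γ (dist x y) = y ∧
    ∀ s t : ℝ, s ∈ Set.Icc 0 (dist x y) → t ∈ Set.Icc 0 (dist x y) →
      dist (γ s) (γ t) = |s - t|

/-- A geodesic metric space: any two points are joined by a geodesic. -/
def IsGeodesicSpace (X : Type*) [MetricSpace X] : Prop :=
  ∀ x y : X, ∃ γ : ℝ → X, IsGeodesicFromTo γ x y

/-- `δ`-hyperbolicity via slim triangles: every side of every geodesic triangle is contained
in the `δ`-neighborhood of the union of the other two sides. -/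
def IsDeltaHyperbolic (X : Type*) [MetricSpace X] (δ : ℝ) : Prop :=
  ∀ x y z : X, ∀ α β γ : ℝ → X,
    IsGeodesicFromTo α x y → IsGeodesicFromTo β y z → IsGeodesicFromTo γ x z →
    ∀ t ∈ Set.Icc (0 : ℝ) (dist x z),
      ∃ u ∈ α '' Set.Icc 0 (dist x y) ∪ β '' Set.Icc 0 (dist y z), dist (γ t) u ≤ δ

/-- A Gromov hyperbolic space: `δ`-hyperbolic for some `δ ≥ 0`. -/
def GromovHyperbolic (X : Type*) [MetricSpace X] : Prop :=
  ∃ δ : ℝ, 0 ≤ δ ∧ IsDeltaHyperbolic X δ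

/-- The trace on `X` of the filter of neighborhoods, in the Gromov compactification, of the
boundary point determined by the geodesic ray `γ`: a sequence (or a function) converges to
the boundary point `[γ]` iff its Gromov products with points far along `γ` tend to `+∞`. -/
def gromovFilter {X : Type*} [MetricSpace X] (γ : ℝ → X) : Filter X :=
  ⨅ M : ℝ, Filter.principal
    {x | M ≤ Filter.liminf (fun t : ℝ => gromovProd (γ 0) x (γ t)) Filter.atTop}

/-- Two geodesic rays are asymptotic, i.e. they determine the same point of the
Gromov boundary. -/
def AsympRays {X : Type*} [MetricSpace X] (γ σ : ℝ → X) : Prop :=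
  ∃ C : ℝ, ∀ t : ℝ, 0 ≤ t → dist (γ t) (σ t) ≤ C

/-- A non-expanding (1-Lipschitz) map. -/
def Nonexpanding {X : Type*} [MetricSpace X] (f : X → X) : Prop :=
  ∀ x y : X, dist (f x) (f y) ≤ dist x y

/-- Membership in the geodesic region `A(σ, R)` with vertex `[σ]`. -/
def InGeodesicRegion {X : Type*} [MetricSpace X] (σ : ℝ → X) (R : ℝ) (x : X) : Prop :=
  ∃ t : ℝ, 0 ≤ t ∧ dist x (σ t) < R

/-- `f` has geodesic limit `[ξ]` at the boundary point `[γ]`: for every sequence converging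
to `[γ]` inside a geodesic region with vertex `[γ]`, the image sequence converges to `[ξ]`. -/
def HasGeodesicLimitAt {X : Type*} [MetricSpace X] (f : X → X) (γ ξ : ℝ → X) : Prop :=
  ∀ σ : ℝ → X, IsGeodesicRay σ → AsympRays γ σ → ∀ R : ℝ, 0 < R →
    ∀ x : ℕ → X, (∀ n, InGeodesicRegion σ R (x n)) →
      Filter.Tendsto x Filter.atTop (gromovFilter γ) →
      Filter.Tendsto (fun n => f (x n)) Filter.atTop (gromovFilter ξ)

/-- `log λ_{η,p}(f)`, the logarithm of the dilation of `f` at the boundary point `η = [γ]`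
with respect to the base point `p`, as an extended real number:
`log λ_{η,p}(f) = liminf_{x → η} (d(x,p) - d(f(x),p))`. -/
def logDilation {X : Type*} [MetricSpace X] (p : X) (γ : ℝ → X) (f : X → X) : EReal :=
  Filter.liminf (fun x => ((dist x p - dist (f x) p : ℝ) : EReal)) (gromovFilter γ)

/-- The dilation of `f` at `[γ]` w.r.t. `p` is finite with logarithm the real number `L`. -/
def HasLogDilation {X : Type*} [MetricSpace X] (p : X) (γ : ℝ → X) (f : X → X) (L : ℝ) : Prop :=
  logDilation p γ f = (L : EReal)

/-- The point `[γ]` of the Gromov boundary is a boundary regular fixed point (BRFP) of `f`: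
the dilation at `[γ]` is finite and `f` has geodesic limit `[γ]` at `[γ]`. -/
def IsBRFP {X : Type*} [MetricSpace X] (f : X → X) (γ : ℝ → X) : Prop :=
  IsGeodesicRay γ ∧ logDilation (γ 0) γ f ≠ ⊤ ∧ HasGeodesicLimitAt f γ γ

/-- The stable dilation of `f` at the BRFP `[γ]` has logarithm `L`:
`log Λ_η = lim_n (1/n) log λ_{η,p}(f^n)`. -/
def HasStableLogDilation {X : Type*} [MetricSpace X] (p : X) (γ : ℝ → X) (f : X → X)
    (L : ℝ) : Prop :=
  ∃ l : ℕ → ℝ, (∀ n : ℕ, 1 ≤ n → HasLogDilation p γ (f^[n]) (l n)) ∧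
    Filter.Tendsto (fun n : ℕ => l n / n) Filter.atTop (nhds L)

/-- A backward orbit of `f`. -/
def IsBackwardOrbit {X : Type*} (f : X → X) (x : ℕ → X) : Prop :=
  ∀ n : ℕ, f (x (n + 1)) = x n

/-- A sequence has bounded step. -/
def BoundedStep {X : Type*} [MetricSpace X] (x : ℕ → X) : Prop :=
  ∃ S : ℝ, ∀ n : ℕ, dist (x n) (x (n + 1)) ≤ S

/-- The backward step rate of a backward orbit with bounded step equals `b`:
`σ_m = lim_n d(x_{n+m}, x_n)` exists for each `m`, and `b = lim_m σ_m / m`. -/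
def HasBackwardStepRate {X : Type*} [MetricSpace X] (x : ℕ → X) (b : ℝ) : Prop :=
  ∃ σ : ℕ → ℝ,
    (∀ m : ℕ, Filter.Tendsto (fun n : ℕ => dist (x (n + m)) (x n)) Filter.atTop (nhds (σ m))) ∧
    Filter.Tendsto (fun m : ℕ => σ m / m) Filter.atTop (nhds b)

/-- `f` is elliptic: some (equivalently, every) forward orbit is bounded. -/
def IsElliptic {X : Type*} [MetricSpace X] (f : X → X) : Prop :=
  ∃ x : X, Bornology.IsBounded (Set.range fun n : ℕ => f^[n] x)

/-- The limit retract `ω_f`: the union of all ω-limit sets of forward orbits of `f`. -/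
def limitRetract {X : Type*} [MetricSpace X] (f : X → X) : Set X :=
  ⋃ x : X,
    {y | ∃ φ : ℕ → ℕ, StrictMono φ ∧ Filter.Tendsto (fun k => f^[φ k] x) Filter.atTop (nhds y)}

/-- `f` is weakly elliptic: elliptic with non-compact limit retract. -/
def WeaklyElliptic {X : Type*} [MetricSpace X] (f : X → X) : Prop :=
  IsElliptic f ∧ ¬ IsCompact (limitRetract f)

/-- The divergence rate (translation length) of `f` equals `c`:
`c(f) = lim_n d(x, f^n(x))/n` for every `x`. -/
def HasDivergenceRate {X : Type*} [MetricSpace X] (f : X → X) (c : ℝ) : Prop :=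
  ∀ x : X, Filter.Tendsto (fun n : ℕ => dist x (f^[n] x) / n) Filter.atTop (nhds c)

/-- `[γ]` is the Denjoy–Wolff point of `f`: every forward orbit converges to `[γ]`. -/
def IsDenjoyWolffPt {X : Type*} [MetricSpace X] (f : X → X) (γ : ℝ → X) : Prop :=
  IsGeodesicRay γ ∧
    ∀ x : X, Filter.Tendsto (fun n : ℕ => f^[n] x) Filter.atTop (gromovFilter γ)

/-- `h = h_{a,p}` is a horofunction normalized at `p` (`h(p) = 0`): a limit, along an escaping
sequence `w`, of the functions `y ↦ d(w_n, y) - d(w_n, p)`. -/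
def IsHorofunctionAt {X : Type*} [MetricSpace X] (p : X) (h : X → ℝ) : Prop :=
  h p = 0 ∧ ∃ w : ℕ → X, Filter.Tendsto (fun n => dist p (w n)) Filter.atTop Filter.atTop ∧
    ∀ y : X, Filter.Tendsto (fun n => dist (w n) y - dist (w n) p) Filter.atTop (nhds (h y))

/-- The horofunction class of `h` (a point `a ∈ ∂_H X`) projects under the canonical map
`Φ : X̄^H → X̄^G` to the Gromov boundary point `[γ]`, i.e. `a ∈ Φ⁻¹([γ])`. -/
def HoroProjectsTo {X : Type*} [MetricSpace X] (p : X) (h : X → ℝ) (γ : ℝ → X) : Prop :=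
  ∃ w : ℕ → X, Filter.Tendsto (fun n => dist p (w n)) Filter.atTop Filter.atTop ∧
    (∀ y : X, Filter.Tendsto (fun n => dist (w n) y - dist (w n) p) Filter.atTop (nhds (h y))) ∧
    Filter.Tendsto w Filter.atTop (gromovFilter γ)

/-- The horofunction compactification is equivalent to the Gromov compactification:
the canonical continuous map `Φ : X̄^H → X̄^G` is injective (hence a homeomorphism). -/
def CompactificationsEquivalent (X : Type*) [MetricSpace X] : Prop :=
  ∀ (p : X) (h₁ h₂ : X → ℝ), IsHorofunctionAt p h₁ → IsHorofunctionAt p h₂ →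
    (∃ γ : ℝ → X, IsGeodesicRay γ ∧ HoroProjectsTo p h₁ γ ∧ HoroProjectsTo p h₂ γ) → h₁ = h₂

/-- An escaping sequence: it eventually leaves every compact subset. -/
def Escaping {X : Type*} [TopologicalSpace X] (x : ℕ → X) : Prop :=
  ∀ K : Set X, IsCompact K → ∀ᶠ n in Filter.atTop, x n ∉ K

/-- A discrete quasi-geodesic. -/
def DiscreteQuasiGeodesic {X : Type*} [MetricSpace X] (x : ℕ → X) : Prop :=
  ∃ A B : ℝ, 1 ≤ A ∧ 0 ≤ B ∧ ∀ n m : ℕ,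
    A⁻¹ * |(n : ℝ) - (m : ℝ)| - B ≤ dist (x n) (x m) ∧
      dist (x n) (x m) ≤ A * |(n : ℝ) - (m : ℝ)| + B

/-- An almost geodesic curve. -/
def IsAlmostGeodesic {X : Type*} [MetricSpace X] (α : ℝ → X) : Prop :=
  ∀ ε : ℝ, 0 < ε → ∃ T : ℝ, 0 ≤ T ∧ ∀ t₁ t₂ : ℝ, T ≤ t₁ → T ≤ t₂ →
    |t₁ - t₂| - ε ≤ dist (α t₁) (α t₂) ∧ dist (α t₁) (α t₂) ≤ |t₁ - t₂|

end
noncomputable section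
namespace JWC

open Filter Topology Metric Set

variable {X : Type*} [MetricSpace X]

/-! ### Gromov product basics -/

lemma gromovProd_nonneg (p x y : X) : 0 ≤ gromovProd p x y := by
  have := dist_triangle x p y
  unfold gromovProd
  rw [dist_comm x p] at this
  linarith

lemma gromovProd_le_left (p x y : X) : gromovProd p x y ≤ dist p x := by
  have := dist_triangle p x y
  unfold gromovProd
  linarith

/-! ### liminf helpers over `atTop : Filter ℝ` -/

lemma le_liminf_atTop_helper {u : ℝ → ℝ} {a C : ℝ} (hub : ∀ t, u t ≤ C)
    (h : ∀ᶠ t in atTop, a ≤ u t) : a ≤ Filter.liminf u atTop := by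
  rw [Filter.liminf_eq]
  refine le_csSup ⟨C, ?_⟩ h
  rintro b hb
  obtain ⟨t, ht⟩ := hb.exists
  exact ht.trans (hub t)

lemma liminf_atTop_le_helper {u : ℝ → ℝ} {C : ℝ} (hC : 0 ≤ C) (hub : ∀ t, u t ≤ C) :
    Filter.liminf u atTop ≤ C := by
  rw [Filter.liminf_eq]
  refine Real.sSup_le ?_ hC
  rintro b hb
  obtain ⟨t, ht⟩ := hb.exists
  exact ht.trans (hub t)

lemma eventually_of_le_liminf_atTop {u : ℝ → ℝ} {M b : ℝ} (hnn : ∀ t, 0 ≤ u t)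
    (h : M ≤ Filter.liminf u atTop) (hb : b < M) : ∀ᶠ t in atTop, b ≤ u t := by
  rw [Filter.liminf_eq] at h
  have hne : {a | ∀ᶠ t in (atTop : Filter ℝ), a ≤ u t}.Nonempty :=
    ⟨0, Filter.Eventually.of_forall hnn⟩
  obtain ⟨a, ha, hba⟩ := exists_lt_of_lt_csSup hne (lt_of_lt_of_le hb h)
  exact ha.mono fun t ht => (le_of_lt hba).trans ht

/-! ### gromovFilter basics -/

lemma tendsto_gromovFilter_iff {ι : Type*} {l : Filter ι} {w : ι → X} {γ : ℝ → X} :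
    Tendsto w l (gromovFilter γ) ↔
      ∀ M : ℝ, ∀ᶠ i in l,
        M ≤ Filter.liminf (fun t : ℝ => gromovProd (γ 0) (w i) (γ t)) atTop := by
  unfold gromovFilter
  rw [tendsto_iInf]
  refine forall_congr' fun M => ?_
  rw [tendsto_principal]
  rfl

lemma mem_gromovFilter_set {γ : ℝ → X} {M : ℝ} :
    {x : X | M ≤ Filter.liminf (fun t : ℝ => gromovProd (γ 0) x (γ t)) atTop} ∈
      gromovFilter γ :=
  Filter.mem_iInf_of_mem M (Filter.mem_principal_self _)

lemma dist_ge_of_liminf_ge {γ : ℝ → X} {x : X} {M : ℝ}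
    (h : M ≤ Filter.liminf (fun t : ℝ => gromovProd (γ 0) x (γ t)) atTop) :
    M ≤ dist (γ 0) x :=
  h.trans (liminf_atTop_le_helper dist_nonneg fun t => gromovProd_le_left _ _ _)

/-! ### geodesic ray basics -/

lemma ray_dist_zero {γ : ℝ → X} (hray : IsGeodesicRay γ) {t : ℝ} (ht : 0 ≤ t) :
    dist (γ 0) (γ t) = t := by
  have := hray 0 t le_rfl ht
  rw [this, abs_sub_comm, abs_of_nonneg (by linarith)]
  ring

lemma ray_gromovProd {γ : ℝ → X} (hray : IsGeodesicRay γ) {s t : ℝ} (hs : 0 ≤ s)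
    (ht : 0 ≤ t) : gromovProd (γ 0) (γ s) (γ t) = min s t := by
  unfold gromovProd
  rw [ray_dist_zero hray hs, ray_dist_zero hray ht, hray s t hs ht]
  rcases le_total s t with h | h
  · rw [abs_of_nonpos (by linarith), min_eq_left h]; ring
  · rw [abs_of_nonneg (by linarith), min_eq_right h]; ring

lemma ray_tendsto_gromovFilter {γ : ℝ → X} (hray : IsGeodesicRay γ) :
    Tendsto γ atTop (gromovFilter γ) := by
  rw [tendsto_gromovFilter_iff]
  intro M
  filter_upwards [eventually_ge_atTop (max M 0)] with s hs
  have hs0 : 0 ≤ s := le_trans (le_max_right _ _) hs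
  refine le_liminf_atTop_helper (C := dist (γ 0) (γ s))
    (fun t => gromovProd_le_left _ _ _) ?_
  filter_upwards [eventually_ge_atTop (max s 0)] with t ht
  have ht0 : 0 ≤ t := le_trans (le_max_right _ _) ht
  rw [ray_gromovProd hray hs0 ht0, min_eq_left (le_trans (le_max_left _ _) ht)]
  exact le_trans (le_max_left M 0) hs

lemma ray_nat_tendsto_gromovFilter {γ : ℝ → X} (hray : IsGeodesicRay γ) :
    Tendsto (fun n : ℕ => γ (n : ℝ)) atTop (gromovFilter γ) :=
  (ray_tendsto_gromovFilter hray).comp tendsto_natCast_atTop_atTop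

/-! ### Rieffel: Busemann limits along almost geodesics -/

lemma tendsto_of_eventually_antitone {u : ℝ → ℝ} {T B : ℝ}
    (hmono : ∀ s t, T ≤ s → s ≤ t → u t ≤ u s) (hbd : ∀ t, T ≤ t → B ≤ u t) :
    ∃ c, Tendsto u atTop (𝓝 c) := by
  have hne : (u '' Ici T).Nonempty := ⟨u T, ⟨T, by simp, rfl⟩⟩
  have hbdd : BddBelow (u '' Ici T) := ⟨B, by rintro _ ⟨t, ht, rfl⟩; exact hbd t ht⟩
  refine ⟨sInf (u '' Ici T), ?_⟩
  rw [Metric.tendsto_nhds]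
  intro ε hε
  obtain ⟨_, ⟨t₀, ht₀, rfl⟩, hlt⟩ := exists_lt_of_csInf_lt hne
    (by linarith : sInf (u '' Ici T) < sInf (u '' Ici T) + ε)
  filter_upwards [eventually_ge_atTop t₀] with t ht
  have h1 : u t ≤ u t₀ := hmono t₀ t ht₀ ht
  have h2 : sInf (u '' Ici T) ≤ u t := csInf_le hbdd ⟨t, le_trans ht₀ ht, rfl⟩
  rw [Real.dist_eq, abs_lt]
  constructor <;> linarith

lemma almostGeodesic_busemann {α : ℝ → X} (hα : IsAlmostGeodesic α) (y : X) :
    ∃ c, Tendsto (fun t : ℝ => dist (α t) y - t) atTop (𝓝 c) := by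
  obtain ⟨T, hT0, hT⟩ := hα 1 one_pos
  apply tendsto_of_eventually_antitone (T := T) (B := -T - 1 - dist (α T) y)
  · intro s t hs hst
    have h := (hT t s (hs.trans hst) hs).2
    rw [abs_of_nonneg (by linarith)] at h
    have h3 := dist_triangle (α t) (α s) y
    linarith
  · intro t ht
    have h := (hT T t le_rfl ht).1
    rw [abs_of_nonpos (by linarith), neg_sub] at h
    have h3 := dist_triangle (α T) (α t) y
    have h4 := dist_triangle (α T) y (α t)
    rw [dist_comm y (α t)] at h4
    linarith

lemma almostGeodesic_escapes {α : ℝ → X} (hα : IsAlmostGeodesic α) (q : X) :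
    Tendsto (fun t : ℝ => dist q (α t)) atTop atTop := by
  obtain ⟨c, hc⟩ := almostGeodesic_busemann hα q
  have : Tendsto (fun t : ℝ => (dist (α t) q - t) + t) atTop atTop :=
    hc.add_atTop tendsto_id
  refine this.congr fun t => ?_
  rw [dist_comm]; ring

lemma almostGeodesic_horofun {α : ℝ → X} (hα : IsAlmostGeodesic α) (q : X) :
    ∃ h : X → ℝ, h q = 0 ∧
      ∀ y, Tendsto (fun t : ℝ => dist (α t) y - dist (α t) q) atTop (𝓝 (h y)) := by
  choose c hc using almostGeodesic_busemann hα
  refine ⟨fun y => c y - c q, by simp, fun y => ?_⟩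
  exact ((hc y).sub (hc q)).congr fun t => by ring

/-! ### A sequence realizing the dilation liminf -/

lemma exists_dilation_seq {γ : ℝ → X} {f : X → X} {L : ℝ}
    (hL : HasLogDilation (γ 0) γ f L) :
    ∃ z : ℕ → X, Tendsto z atTop (gromovFilter γ) ∧
      Tendsto (fun n : ℕ => dist (z n) (γ 0) - dist (f (z n)) (γ 0)) atTop (𝓝 L) ∧
      ∀ n : ℕ, (n : ℝ) ≤ dist (γ 0) (z n) := by
  unfold HasLogDilation logDilation at hL
  have key : ∀ k : ℕ, ∃ x : X,
      ((k : ℝ) ≤ Filter.liminf (fun t : ℝ => gromovProd (γ 0) x (γ t)) atTop) ∧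
      |(dist x (γ 0) - dist (f x) (γ 0)) - L| < 1 / (k + 1) := by
    intro k
    have hε : (0:ℝ) < 1 / (k + 1) := by positivity
    have hev : ∀ᶠ x in gromovFilter γ,
        ((L - 1/(k+1) : ℝ) : EReal) < ((dist x (γ 0) - dist (f x) (γ 0) : ℝ) : EReal) := by
      refine Filter.eventually_lt_of_lt_liminf ?_ (by isBoundedDefault)
      rw [hL]
      exact_mod_cast (by linarith : L - 1/(k+1) < L)
    have hfreq : ∃ᶠ x in gromovFilter γ,
        ((dist x (γ 0) - dist (f x) (γ 0) : ℝ) : EReal) < ((L + 1/(k+1) : ℝ) : EReal) := by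
      refine Filter.frequently_lt_of_liminf_lt (by isBoundedDefault) ?_
      rw [hL]
      exact_mod_cast (by linarith : L < L + 1/(k+1))
    have hmem : ∀ᶠ x in gromovFilter γ,
        (k : ℝ) ≤ Filter.liminf (fun t : ℝ => gromovProd (γ 0) x (γ t)) atTop :=
      Filter.eventually_iff.2 (mem_gromovFilter_set (M := (k:ℝ)))
    obtain ⟨x, hx1, hx2, hx3⟩ := (hfreq.and_eventually (hev.and hmem)).exists
    rw [EReal.coe_lt_coe_iff] at hx1 hx2
    exact ⟨x, hx3, abs_lt.2 ⟨by linarith, by linarith⟩⟩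
  choose z hz1 hz2 using key
  refine ⟨z, ?_, ?_, fun n => dist_ge_of_liminf_ge (hz1 n)⟩
  · rw [tendsto_gromovFilter_iff]
    intro M
    obtain ⟨N, hN⟩ := exists_nat_ge M
    filter_upwards [eventually_ge_atTop N] with n hn
    exact le_trans (hN.trans (Nat.cast_le.2 hn)) (hz1 n)
  · rw [Metric.tendsto_atTop]
    intro ε hε
    obtain ⟨N, hN⟩ := exists_nat_one_div_lt hε
    refine ⟨N, fun n hn => ?_⟩
    rw [Real.dist_eq]
    refine lt_of_lt_of_le (lt_of_lt_of_le (hz2 n) ?_) hN.le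
    apply one_div_le_one_div_of_le (by positivity)
    exact_mod_cast by omega
/-! ### Subsequential horofunction limits via properness -/

lemma exists_horolimit_subseq [ProperSpace X] (z : ℕ → X) (q : X) :
    ∃ (ψ : ℕ → ℕ) (h : X → ℝ), StrictMono ψ ∧ h q = 0 ∧
      ∀ y, Tendsto (fun n : ℕ => dist (z (ψ n)) y - dist (z (ψ n)) q) atTop (𝓝 (h y)) := by
  haveI : Nonempty X := ⟨q⟩
  haveI := secondCountable_of_proper (α := X)
  set D : ℕ → X := TopologicalSpace.denseSeq X with hD
  have hdense : DenseRange D := TopologicalSpace.denseRange_denseSeq X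
  set F : ℕ → X → ℝ := fun n y => dist (z n) y - dist (z n) q with hF
  have hFbd : ∀ n y, F n y ∈ Icc (-(dist q y)) (dist q y) := by
    intro n y
    have h := abs_dist_sub_le y q (z n)
    rw [dist_comm y (z n), dist_comm q (z n), dist_comm y q] at h
    exact abs_le.1 h
  have hLip : ∀ n y y', |F n y - F n y'| ≤ dist y y' := by
    intro n y y'
    have h := abs_dist_sub_le y y' (z n)
    rw [dist_comm y (z n), dist_comm y' (z n)] at h
    have he : F n y - F n y' = dist (z n) y - dist (z n) y' := by rw [hF]; ring
    rw [he]
    exact h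
  haveI : ∀ k : ℕ, CompactSpace (Icc (-(dist q (D k))) (dist q (D k)) : Set ℝ) :=
    fun k => isCompact_iff_compactSpace.1 isCompact_Icc
  set G : ℕ → (∀ k : ℕ, (Icc (-(dist q (D k))) (dist q (D k)) : Set ℝ)) :=
    fun n k => ⟨F n (D k), hFbd n (D k)⟩ with hG
  obtain ⟨a, -, ψ, hψ, ha⟩ :=
    IsCompact.tendsto_subseq (x := G) isCompact_univ (fun n => mem_univ _)
  have hak : ∀ k, Tendsto (fun n => F (ψ n) (D k)) atTop (𝓝 (a k : ℝ)) := by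
    intro k
    have h1 : Tendsto (fun n => (G (ψ n)) k) atTop (𝓝 (a k)) :=
      ((continuous_apply k).tendsto a).comp ha
    exact (continuous_subtype_val.tendsto (a k)).comp h1
  have hcauchy : ∀ y, ∃ c, Tendsto (fun n => F (ψ n) y) atTop (𝓝 c) := by
    intro y
    apply cauchySeq_tendsto_of_complete
    rw [Metric.cauchySeq_iff]
    intro ε hε
    obtain ⟨k, hk⟩ := Metric.denseRange_iff.1 hdense y (ε/4) (by positivity)
    have hC : CauchySeq (fun n => F (ψ n) (D k)) := (hak k).cauchySeq
    rw [Metric.cauchySeq_iff] at hC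
    obtain ⟨N, hN⟩ := hC (ε/2) (by positivity)
    refine ⟨N, fun m hm n hn => ?_⟩
    have h1 := hN m hm n hn
    have l1 := hLip (ψ m) y (D k)
    have l2 := hLip (ψ n) y (D k)
    rw [Real.dist_eq] at h1 ⊢
    have tri : |F (ψ m) y - F (ψ n) y| ≤
        |F (ψ m) y - F (ψ m) (D k)| + |F (ψ m) (D k) - F (ψ n) (D k)| +
          |F (ψ n) (D k) - F (ψ n) y| := by
      have t1 := abs_sub_le (F (ψ m) y) (F (ψ m) (D k)) (F (ψ n) y)
      have t2 := abs_sub_le (F (ψ m) (D k)) (F (ψ n) (D k)) (F (ψ n) y)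
      linarith
    have l2' : |F (ψ n) (D k) - F (ψ n) y| ≤ dist y (D k) := by
      rw [abs_sub_comm]; exact l2
    linarith
  choose h hh using hcauchy
  have hq : h q = 0 := by
    refine tendsto_nhds_unique (hh q) ?_
    have : ∀ n : ℕ, F (ψ n) q = 0 := fun n => by rw [hF]; ring
    simpa [this] using (tendsto_const_nhds : Tendsto (fun _ : ℕ => (0:ℝ)) atTop (𝓝 0))
  exact ⟨ψ, h, hψ, hq, hh⟩
/-! ### Key lemma: the dilation limit along almost geodesics, at base point `γ 0` -/

lemma keyA [ProperSpace X] (hequiv : CompactificationsEquivalent X)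
    {f : X → X} (hf : Nonexpanding f) {γ : ℝ → X} (hray : IsGeodesicRay γ)
    {L : ℝ} (hL : HasLogDilation (γ 0) γ f L)
    {β : ℝ → X} (hβ : IsAlmostGeodesic β)
    (hβconv : Tendsto β atTop (gromovFilter γ)) :
    Tendsto (fun t : ℝ => dist (γ 0) (β t) - dist (γ 0) (f (β t))) atTop (𝓝 L) := by
  set q := γ 0 with hqdef
  obtain ⟨z, hzconv, hzL, hzdist⟩ := exists_dilation_seq hL
  obtain ⟨ψ, h, hψ, hq0, hh⟩ := exists_horolimit_subseq z q
  obtain ⟨hb, hbq, hbten⟩ := almostGeodesic_horofun hβ q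
  have hzψconv : Tendsto (fun n => z (ψ n)) atTop (gromovFilter γ) :=
    hzconv.comp hψ.tendsto_atTop
  have hzψesc : Tendsto (fun n => dist q (z (ψ n))) atTop atTop := by
    refine tendsto_atTop_mono (fun n => ?_) tendsto_natCast_atTop_atTop
    calc ((n:ℝ)) ≤ (ψ n : ℝ) := Nat.cast_le.2 hψ.le_apply
      _ ≤ dist q (z (ψ n)) := hzdist (ψ n)
  have hβesc : Tendsto (fun n : ℕ => dist q (β (n:ℝ))) atTop atTop :=
    (almostGeodesic_escapes hβ q).comp tendsto_natCast_atTop_atTop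
  have hβnat : Tendsto (fun n : ℕ => β (n:ℝ)) atTop (gromovFilter γ) :=
    hβconv.comp tendsto_natCast_atTop_atTop
  have hbten_nat : ∀ y, Tendsto (fun n : ℕ => dist (β (n:ℝ)) y - dist (β (n:ℝ)) q)
      atTop (𝓝 (hb y)) := fun y => (hbten y).comp tendsto_natCast_atTop_atTop
  have heq : h = hb := by
    apply hequiv q h hb
    · exact ⟨hq0, fun n => z (ψ n), hzψesc, hh⟩
    · exact ⟨hbq, fun n => β (n:ℝ), hβesc, hbten_nat⟩
    · exact ⟨γ, hray, ⟨fun n => z (ψ n), hzψesc, hh, hzψconv⟩,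
        ⟨fun n => β (n:ℝ), hβesc, hbten_nat, hβnat⟩⟩
  have hub : ∀ t : ℝ, dist q (β t) - dist q (f (β t)) ≤ dist q (β t) + hb (β t) + L := by
    intro t
    have key : ∀ n : ℕ, dist q (β t) - dist q (f (β t)) ≤
        dist q (β t) + (dist (z (ψ n)) (β t) - dist (z (ψ n)) q) +
          (dist (z (ψ n)) q - dist (f (z (ψ n))) q) := by
      intro n
      have h1 : dist (f (z (ψ n))) q ≤ dist (f (z (ψ n))) (f (β t)) + dist (f (β t)) q :=
        dist_triangle _ _ _
      have h2 : dist (f (z (ψ n))) (f (β t)) ≤ dist (z (ψ n)) (β t) := hf _ _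
      have h3 : dist q (f (β t)) = dist (f (β t)) q := dist_comm _ _
      have h4 : dist (z (ψ n)) q = dist q (z (ψ n)) := dist_comm _ _
      have h5 : dist (f (z (ψ n))) q = dist (f (z (ψ n))) q := rfl
      linarith
    have hR : Tendsto (fun n : ℕ => dist q (β t) +
        (dist (z (ψ n)) (β t) - dist (z (ψ n)) q) +
          (dist (z (ψ n)) q - dist (f (z (ψ n))) q)) atTop
        (𝓝 (dist q (β t) + h (β t) + L)) :=
      (tendsto_const_nhds.add (hh (β t))).add (hzL.comp hψ.tendsto_atTop)
    have := ge_of_tendsto hR (Filter.Eventually.of_forall key)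
    rw [heq] at this
    exact this
  obtain ⟨c0, hc0⟩ := almostGeodesic_busemann hβ q
  have hL' := hL
  unfold HasLogDilation logDilation at hL'
  rw [Metric.tendsto_nhds]
  intro ε hε
  have hlow : ∀ᶠ t : ℝ in atTop, L - ε/2 < dist (β t) q - dist (f (β t)) q := by
    have hev : ∀ᶠ x in gromovFilter γ,
        ((L - ε/2 : ℝ) : EReal) < ((dist x q - dist (f x) q : ℝ) : EReal) := by
      refine Filter.eventually_lt_of_lt_liminf ?_ (by isBoundedDefault)
      rw [hL']
      exact_mod_cast (by linarith : L - ε/2 < L)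
    exact (hβconv.eventually hev).mono fun t ht => by exact_mod_cast ht
  obtain ⟨T₁, hT₁0, hT₁⟩ := hβ (ε/8) (by positivity)
  have hc0' : ∀ᶠ t : ℝ in atTop, |dist (β t) q - t - c0| < ε/8 := by
    rw [Metric.tendsto_nhds] at hc0
    filter_upwards [hc0 (ε/8) (by positivity)] with t ht
    rw [Real.dist_eq] at ht
    exact ht
  have hupper : ∀ᶠ t : ℝ in atTop, hb (β t) ≤ -t - c0 + ε/4 := by
    filter_upwards [eventually_ge_atTop T₁, hc0'] with t ht htc
    have hlim := hbten (β t)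
    refine le_of_tendsto hlim ?_
    filter_upwards [eventually_ge_atTop t, eventually_ge_atTop T₁, hc0'] with s hst hsT hsc
    have hd : dist (β s) (β t) ≤ s - t := by
      have := (hT₁ s t hsT ht).2
      rwa [abs_of_nonneg (by linarith)] at this
    have hq' : s + c0 - ε/8 ≤ dist (β s) q := by
      have := (abs_lt.1 hsc).1
      linarith
    linarith
  filter_upwards [hlow, hupper, hc0'] with t h1 h2 h3
  have h4 := hub t
  have h5 : dist q (β t) ≤ t + c0 + ε/8 := by
    rw [dist_comm]
    have := (abs_lt.1 h3).2
    linarith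
  have e1 : dist q (β t) = dist (β t) q := dist_comm _ _
  have e2 : dist q (f (β t)) = dist (f (β t)) q := dist_comm _ _
  rw [Real.dist_eq, abs_lt]
  constructor <;> linarith
/-! ### Four-point inequality from slim triangles -/

lemma geo_dist_left {c : ℝ → X} {x z : X} (hc : IsGeodesicFromTo c x z) {t : ℝ}
    (ht : t ∈ Icc 0 (dist x z)) : dist x (c t) = t := by
  have h := hc.2.2 0 t ⟨le_rfl, dist_nonneg⟩ ht
  rw [hc.1] at h
  rw [h, abs_sub_comm, abs_of_nonneg (by linarith [ht.1])]
  ring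

lemma geo_dist_right {c : ℝ → X} {x z : X} (hc : IsGeodesicFromTo c x z) {t : ℝ}
    (ht : t ∈ Icc 0 (dist x z)) : dist z (c t) = dist x z - t := by
  have h := hc.2.2 (dist x z) t ⟨dist_nonneg, le_rfl⟩ ht
  rw [hc.2.1] at h
  rw [h, abs_of_nonneg (by linarith [ht.2])]

lemma four_point (hgeo : IsGeodesicSpace X) {δ : ℝ} (hδ : IsDeltaHyperbolic X δ)
    (p x y z : X) :
    min (gromovProd p x y) (gromovProd p y z) ≤ gromovProd p x z + 3*δ := by
  obtain ⟨c, hc⟩ := hgeo x z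
  obtain ⟨ga, hga⟩ := hgeo x y
  obtain ⟨gb, hgb⟩ := hgeo y z
  obtain ⟨d1, hd1⟩ := hgeo x p
  obtain ⟨d2, hd2⟩ := hgeo p z
  have tri1 := dist_triangle x z p
  have tri2 := dist_triangle x p z
  have tri3 := dist_triangle p x z
  have cxz : dist z p = dist p z := dist_comm _ _
  have cxp : dist x p = dist p x := dist_comm _ _
  set tm : ℝ := (dist x p + dist x z - dist p z)/2 with htmdef
  have htm0 : 0 ≤ tm := by rw [htmdef]; linarith
  have htm1 : tm ≤ dist x z := by rw [htmdef]; linarith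
  have hmem : tm ∈ Icc 0 (dist x z) := ⟨htm0, htm1⟩
  have hxm : dist x (c tm) = tm := geo_dist_left hc hmem
  have hzm : dist z (c tm) = dist x z - tm := geo_dist_right hc hmem
  -- step 1 : dist p (c tm) ≤ gromovProd p x z + 2δ
  have step1 : dist p (c tm) ≤ gromovProd p x z + 2*δ := by
    obtain ⟨u, hu, hud⟩ := hδ x p z d1 d2 c hd1 hd2 hc tm hmem
    rcases hu with ⟨s, hs, rfl⟩ | ⟨s, hs, rfl⟩
    · have h1 : dist x (d1 s) = s := geo_dist_left hd1 hs
      have h2 : dist p (d1 s) = dist x p - s := geo_dist_right hd1 hs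
      have h3 : |dist x (d1 s) - dist x (c tm)| ≤ dist (d1 s) (c tm) := by
        have := abs_dist_sub_le (d1 s) (c tm) x
        rwa [dist_comm (d1 s) x, dist_comm (c tm) x] at this
      rw [h1, hxm] at h3
      rw [dist_comm (c tm) (d1 s)] at hud
      have h4 := dist_triangle p (d1 s) (c tm)
      have h5 := (abs_le.1 (h3.trans hud)).1
      unfold gromovProd
      linarith
    · have h1 : dist p (d2 s) = s := geo_dist_left hd2 hs
      have h2 : dist z (d2 s) = dist p z - s := geo_dist_right hd2 hs
      have h3 : |dist z (d2 s) - dist z (c tm)| ≤ dist (d2 s) (c tm) := by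
        have := abs_dist_sub_le (d2 s) (c tm) z
        rwa [dist_comm (d2 s) z, dist_comm (c tm) z] at this
      rw [h2, hzm] at h3
      rw [dist_comm (c tm) (d2 s)] at hud
      have h5 := (abs_le.1 (h3.trans hud)).1
      have h4 := dist_triangle p (d2 s) (c tm)
      unfold gromovProd
      linarith
  obtain ⟨v, hv, hvd⟩ := hδ x y z ga gb c hga hgb hc tm hmem
  rcases hv with ⟨s, hs, rfl⟩ | ⟨s, hs, rfl⟩
  · refine le_trans (min_le_left _ _) ?_
    have h1 : dist x (ga s) = s := geo_dist_left hga hs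
    have h2 : dist y (ga s) = dist x y - s := geo_dist_right hga hs
    have t1 := dist_triangle p (ga s) x
    have t2 := dist_triangle p (ga s) y
    rw [dist_comm (ga s) x] at t1
    rw [dist_comm (ga s) y] at t2
    have t3 := dist_triangle p (c tm) (ga s)
    unfold gromovProd at step1 ⊢
    linarith
  · refine le_trans (min_le_right _ _) ?_
    have h1 : dist y (gb s) = s := geo_dist_left hgb hs
    have h2 : dist z (gb s) = dist y z - s := geo_dist_right hgb hs
    have t1 := dist_triangle p (gb s) y
    have t2 := dist_triangle p (gb s) z
    rw [dist_comm (gb s) y] at t1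
    rw [dist_comm (gb s) z] at t2
    have t3 := dist_triangle p (c tm) (gb s)
    unfold gromovProd at step1 ⊢
    linarith
/-! ### The image of an almost geodesic converging to a BRFP -/

lemma image_almostGeodesic {f : X → X} (hf : Nonexpanding f) {β : ℝ → X}
    (hβ : IsAlmostGeodesic β) {q : X} {L c0 : ℝ}
    (hφ : Tendsto (fun t : ℝ => dist q (β t) - dist q (f (β t))) atTop (𝓝 L))
    (hc0 : Tendsto (fun t : ℝ => dist (β t) q - t) atTop (𝓝 c0)) :
    IsAlmostGeodesic (fun t => f (β t)) := by
  intro ε hε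
  obtain ⟨T₁, hT₁0, hT₁⟩ := hβ ε hε
  have h1 : ∀ᶠ t : ℝ in atTop, |dist q (β t) - dist q (f (β t)) - L| < ε/4 := by
    rw [Metric.tendsto_nhds] at hφ
    filter_upwards [hφ (ε/4) (by positivity)] with t ht
    rwa [Real.dist_eq] at ht
  have h2 : ∀ᶠ t : ℝ in atTop, |dist (β t) q - t - c0| < ε/4 := by
    rw [Metric.tendsto_nhds] at hc0
    filter_upwards [hc0 (ε/4) (by positivity)] with t ht
    rwa [Real.dist_eq] at ht
  obtain ⟨T₂, hT₂⟩ := eventually_atTop.1 (h1.and h2)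
  set T := max (max T₁ T₂) 0 with hT
  have key : ∀ s t : ℝ, T ≤ s → s ≤ t →
      t - s - ε ≤ dist (f (β s)) (f (β t)) ∧ dist (f (β s)) (f (β t)) ≤ t - s := by
    intro s t hs hst
    have hsT₁ : T₁ ≤ s := le_trans ((le_max_left _ _).trans (le_max_left _ _)) hs
    have hsT₂ : T₂ ≤ s := le_trans ((le_max_right _ _).trans (le_max_left _ _)) hs
    have htT₁ : T₁ ≤ t := hsT₁.trans hst
    have htT₂ : T₂ ≤ t := hsT₂.trans hst
    have hupper : dist (β s) (β t) ≤ t - s := by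
      have := (hT₁ s t hsT₁ htT₁).2
      rwa [abs_of_nonpos (by linarith), neg_sub] at this
    constructor
    · have hd := dist_triangle q (f (β s)) (f (β t))
      have hs1 := (abs_lt.1 (hT₂ s hsT₂).1).1
      have hs2 := (abs_lt.1 (hT₂ s hsT₂).2).2
      have ht1 := (abs_lt.1 (hT₂ t htT₂).1).2
      have ht2 := (abs_lt.1 (hT₂ t htT₂).2).1
      have e1 : dist (β s) q = dist q (β s) := dist_comm _ _
      have e2 : dist (β t) q = dist q (β t) := dist_comm _ _
      linarith
    · exact (hf _ _).trans hupper
  refine ⟨T, le_max_right _ _, fun t₁ t₂ ht₁ ht₂ => ?_⟩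
  rcases le_total t₁ t₂ with hc | hc
  · have := key t₁ t₂ ht₁ hc
    rw [abs_of_nonpos (by linarith), neg_sub]
    exact this
  · have := key t₂ t₁ ht₂ hc
    rw [abs_of_nonneg (by linarith), dist_comm (f (β t₁)) (f (β t₂))]
    exact this

lemma image_tendsto (hgeo : IsGeodesicSpace X) {δ : ℝ} (hδ : IsDeltaHyperbolic X δ)
    {f : X → X} (hf : Nonexpanding f) {γ : ℝ → X} (hray : IsGeodesicRay γ)
    (hgl : HasGeodesicLimitAt f γ γ)
    {β : ℝ → X} (hβconv : Tendsto β atTop (gromovFilter γ)) {L : ℝ}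
    (hφβ : Tendsto (fun t : ℝ => dist (γ 0) (β t) - dist (γ 0) (f (β t))) atTop (𝓝 L))
    (hφγ : Tendsto (fun t : ℝ => dist (γ 0) (γ t) - dist (γ 0) (f (γ t))) atTop (𝓝 L)) :
    Tendsto (fun t => f (β t)) atTop (gromovFilter γ) := by
  have hfγ : Tendsto (fun n : ℕ => f (γ (n:ℝ))) atTop (gromovFilter γ) := by
    refine hgl γ hray ⟨0, fun t _ => by simp⟩ 1 one_pos (fun n => γ (n:ℝ))
      (fun n => ⟨(n:ℝ), Nat.cast_nonneg n, by rw [dist_self]; exact one_pos⟩)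
      (ray_nat_tendsto_gromovFilter hray)
  rw [tendsto_gromovFilter_iff]
  intro M
  have hβb : ∀ᶠ t : ℝ in atTop, dist (γ 0) (β t) - dist (γ 0) (f (β t)) ≤ L + 1 := by
    rw [Metric.tendsto_nhds] at hφβ
    filter_upwards [hφβ 1 one_pos] with t ht
    rw [Real.dist_eq] at ht
    linarith [(abs_lt.1 ht).2]
  have hγb : ∀ᶠ n : ℕ in atTop, dist (γ 0) (γ (n:ℝ)) - dist (γ 0) (f (γ (n:ℝ))) ≤ L + 1 := by
    have h := hφγ.comp (tendsto_natCast_atTop_atTop (R := ℝ))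
    rw [Metric.tendsto_nhds] at h
    filter_upwards [h 1 one_pos] with n hn
    rw [Function.comp, Real.dist_eq] at hn
    linarith [(abs_lt.1 hn).2]
  obtain ⟨N₂, hN₂⟩ := eventually_atTop.1 hγb
  have hE3 := (tendsto_gromovFilter_iff.1 hfγ) (M + 3*δ + 1)
  obtain ⟨N₃, hN₃⟩ := eventually_atTop.1 hE3
  have hE4 := (tendsto_gromovFilter_iff.1 hβconv) (M + 3*δ + L + 3)
  filter_upwards [hE4, hβb] with t ht4 htb
  have hev_s : ∀ᶠ s : ℝ in atTop, (M + 3*δ + L + 2) ≤ gromovProd (γ 0) (β t) (γ s) :=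
    eventually_of_le_liminf_atTop (fun s => gromovProd_nonneg _ _ _) ht4 (by linarith)
  obtain ⟨S, hS⟩ := eventually_atTop.1 hev_s
  obtain ⟨n, hn1, hn2, hn3⟩ : ∃ n : ℕ, N₂ ≤ n ∧ N₃ ≤ n ∧ S ≤ (n:ℝ) := by
    obtain ⟨n₀, hn₀⟩ := exists_nat_ge S
    refine ⟨max n₀ (max N₂ N₃), ?_, ?_, ?_⟩
    · exact le_trans (le_max_left _ _) (le_max_right _ _)
    · exact le_trans (le_max_right _ _) (le_max_right _ _)
    · exact hn₀.trans (Nat.cast_le.2 (le_max_left _ _))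
  have hA : M + 3*δ + 1 ≤ gromovProd (γ 0) (f (β t)) (f (γ (n:ℝ))) := by
    have hprod := hS (n:ℝ) hn3
    have hne := hf (β t) (γ (n:ℝ))
    have hφ2 := hN₂ n hn1
    unfold gromovProd at hprod ⊢
    linarith
  have hev3 : ∀ᶠ s : ℝ in atTop, (M + 3*δ) ≤ gromovProd (γ 0) (f (γ (n:ℝ))) (γ s) :=
    eventually_of_le_liminf_atTop (fun s => gromovProd_nonneg _ _ _) (hN₃ n hn2)
      (by linarith)
  refine le_liminf_atTop_helper (C := dist (γ 0) (f (β t)))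
    (fun s => gromovProd_le_left _ _ _) ?_
  filter_upwards [hev3] with s hs3
  have h4pt := four_point hgeo hδ (γ 0) (f (β t)) (f (γ (n:ℝ))) (γ s)
  have hmin : M + 3*δ ≤
      min (gromovProd (γ 0) (f (β t)) (f (γ (n:ℝ)))) (gromovProd (γ 0) (f (γ (n:ℝ))) (γ s)) :=
    le_min (by linarith) hs3
  linarith

end JWC
end

open Filter Topology Metric Set JWC in
/-- **Lemma (Julia–Wolff–Carathéodory along almost geodesics).**
Let `X` be a proper geodesic Gromov hyperbolic metric space whose horofunction
compactification is equivalent to its Gromov compactification. Let `f : X → X` be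
non-expanding, `η = [γ]` a BRFP of `f` with `log λ_η(f) = L`, and `α : [0,∞) → X` an
almost geodesic with `α(t) → η`. Then for every `p ∈ X`,
`lim_{t→∞} (d(p,α(t)) − d(p,f(α(t)))) = log λ_η(f)`. -/
theorem dilation_limit_along_almost_geodesic
    {X : Type*} [MetricSpace X] [ProperSpace X]
    (hgeo : IsGeodesicSpace X) (hhyp : GromovHyperbolic X)
    (hequiv : CompactificationsEquivalent X)
    (f : X → X) (hf : Nonexpanding f)
    (γ : ℝ → X) (hη : IsBRFP f γ)
    (L : ℝ) (hL : HasLogDilation (γ 0) γ f L)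
    (α : ℝ → X) (hα : IsAlmostGeodesic α)
    (hαconv : Filter.Tendsto α Filter.atTop (gromovFilter γ)) :
    ∀ p : X, Filter.Tendsto (fun t : ℝ => dist p (α t) - dist p (f (α t)))
      Filter.atTop (nhds L) := by
  obtain ⟨hray, -, hgl⟩ := hη
  obtain ⟨δ, -, hδ⟩ := hhyp
  intro p
  have hγag : IsAlmostGeodesic γ := by
    intro ε hε
    refine ⟨0, le_rfl, fun t₁ t₂ h₁ h₂ => ?_⟩
    rw [hray t₁ t₂ h₁ h₂]
    constructor <;> linarith
  have hγconv := ray_tendsto_gromovFilter hray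
  have hφα := keyA hequiv hf hray hL hα hαconv
  have hφγ := keyA hequiv hf hray hL hγag hγconv
  obtain ⟨h₁, h₁q, h₁ten⟩ := almostGeodesic_horofun hα (γ 0)
  obtain ⟨c0, hc0⟩ := almostGeodesic_busemann hα (γ 0)
  have hfαag : IsAlmostGeodesic (fun t => f (α t)) := image_almostGeodesic hf hα hφα hc0
  have hfαconv : Tendsto (fun t => f (α t)) atTop (gromovFilter γ) :=
    image_tendsto hgeo hδ hf hray hgl hαconv hφα hφγ
  obtain ⟨h₂, h₂q, h₂ten⟩ := almostGeodesic_horofun hfαag (γ 0)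
  have hαesc : Tendsto (fun n : ℕ => dist (γ 0) (α (n:ℝ))) atTop atTop :=
    (almostGeodesic_escapes hα (γ 0)).comp tendsto_natCast_atTop_atTop
  have hfαesc : Tendsto (fun n : ℕ => dist (γ 0) (f (α (n:ℝ)))) atTop atTop :=
    (almostGeodesic_escapes hfαag (γ 0)).comp tendsto_natCast_atTop_atTop
  have h₁nat : ∀ y, Tendsto (fun n : ℕ => dist (α (n:ℝ)) y - dist (α (n:ℝ)) (γ 0))
      atTop (𝓝 (h₁ y)) := fun y => (h₁ten y).comp tendsto_natCast_atTop_atTop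
  have h₂nat : ∀ y, Tendsto (fun n : ℕ => dist (f (α (n:ℝ))) y - dist (f (α (n:ℝ))) (γ 0))
      atTop (𝓝 (h₂ y)) := fun y => (h₂ten y).comp tendsto_natCast_atTop_atTop
  have hαnat : Tendsto (fun n : ℕ => α (n:ℝ)) atTop (gromovFilter γ) :=
    hαconv.comp tendsto_natCast_atTop_atTop
  have hfαnat : Tendsto (fun n : ℕ => f (α (n:ℝ))) atTop (gromovFilter γ) :=
    hfαconv.comp tendsto_natCast_atTop_atTop
  have heq : h₁ = h₂ := by
    apply hequiv (γ 0) h₁ h₂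
    · exact ⟨h₁q, fun n => α (n:ℝ), hαesc, h₁nat⟩
    · exact ⟨h₂q, fun n => f (α (n:ℝ)), hfαesc, h₂nat⟩
    · exact ⟨γ, hray, ⟨fun n => α (n:ℝ), hαesc, h₁nat, hαnat⟩,
        ⟨fun n => f (α (n:ℝ)), hfαesc, h₂nat, hfαnat⟩⟩
  have hcomb : Tendsto (fun t : ℝ =>
      (dist (α t) p - dist (α t) (γ 0)) - (dist (f (α t)) p - dist (f (α t)) (γ 0)) +
        (dist (γ 0) (α t) - dist (γ 0) (f (α t)))) atTop (𝓝 (h₁ p - h₂ p + L)) :=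
    ((h₁ten p).sub (h₂ten p)).add hφα
  have hval : h₁ p - h₂ p + L = L := by rw [heq]; ring
  rw [hval] at hcomb
  refine hcomb.congr fun t => ?_
  rw [dist_comm (α t) p, dist_comm (f (α t)) p, dist_comm (α t) (γ 0),
    dist_comm (f (α t)) (γ 0)]
  ring
end

section
/- Let (X,d) be a proper geodesic Gromov hyperbolic metric space, f : X → X a non-expanding map, p ∈ X, and η ∈ ∂_G X a boundary regular fixed point of f. Then the sequence (log λ_{η,p}(f^n))_{n≥1} is superadditive, i.e. log λ_{η,p}(f^{n+m}) ≥ log λ_{η,p}(f^n) + log λ_{η,p}(f^m) for all n, m ≥ 1; consequently the limit lim_{n→∞} (1/n) log λ_{η,p}(f^n) exists, equals sup_n (1/n) log λ_{η,p}(f^n), and is finite. -/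
section BRFPAux

open Filter Topology Metric Set

variable {X : Type*} [MetricSpace X]

namespace BRFPAux

lemma gp_nonneg (p x y : X) : 0 ≤ gromovProd p x y := by
  have h := dist_triangle x p y
  rw [dist_comm x p] at h
  rw [gromovProd]; linarith

lemma gp_le_left (p x y : X) : gromovProd p x y ≤ dist p x := by
  have h := dist_triangle p x y
  rw [gromovProd]; linarith

lemma gp_comm (p x y : X) : gromovProd p x y = gromovProd p y x := by
  rw [gromovProd, gromovProd, dist_comm x y]; ring

lemma gp_lip (p x y y' : X) : gromovProd p x y - dist y y' ≤ gromovProd p x y' := by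
  have h1 := dist_triangle p y' y
  have h2 := dist_triangle x y y'
  rw [gromovProd, gromovProd]
  rw [dist_comm y' y] at h1
  linarith

lemma geod_dist_left {α : ℝ → X} {a b : X} (h : IsGeodesicFromTo α a b) {r : ℝ}
    (hr : r ∈ Icc 0 (dist a b)) : dist a (α r) = r := by
  have h3 := h.2.2 0 r ⟨le_rfl, dist_nonneg⟩ hr
  rw [h.1] at h3
  rw [h3, zero_sub, abs_neg, abs_of_nonneg hr.1]

lemma geod_dist_right {α : ℝ → X} {a b : X} (h : IsGeodesicFromTo α a b) {r : ℝ}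
    (hr : r ∈ Icc 0 (dist a b)) : dist (α r) b = dist a b - r := by
  have h3 := h.2.2 r (dist a b) hr ⟨dist_nonneg, le_rfl⟩
  rw [h.2.1] at h3
  rw [h3, abs_of_nonpos (by linarith [hr.2]), neg_sub]

lemma gp_le_dist_geod {α : ℝ → X} {a b : X} (h : IsGeodesicFromTo α a b) {r : ℝ}
    (hr : r ∈ Icc 0 (dist a b)) (p : X) : gromovProd p a b ≤ dist p (α r) := by
  have h1 := geod_dist_left h hr
  have h2 := geod_dist_right h hr
  have t1 := dist_triangle p (α r) a
  have t2 := dist_triangle p (α r) b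
  rw [dist_comm (α r) a, h1] at t1
  rw [h2] at t2
  rw [gromovProd]; linarith

variable {γ : ℝ → X}

lemma ray_dist0 (hγ : IsGeodesicRay γ) {t : ℝ} (ht : 0 ≤ t) : dist (γ 0) (γ t) = t := by
  rw [hγ 0 t le_rfl ht, zero_sub, abs_neg, abs_of_nonneg ht]

lemma ray_geod (hγ : IsGeodesicRay γ) {u : ℝ} (hu : 0 ≤ u) :
    IsGeodesicFromTo γ (γ 0) (γ u) := by
  refine ⟨rfl, by rw [ray_dist0 hγ hu], fun s t hs ht => hγ s t hs.1 ht.1⟩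

/-- Key slim-triangle estimate along the ray. -/
lemma slim_ray {δ : ℝ} (hδ : IsDeltaHyperbolic X δ) (hgeo : IsGeodesicSpace X)
    (hγ : IsGeodesicRay γ) (x : X) {u t : ℝ} (h0 : 0 ≤ u) (hut : u ≤ t) :
    min u (gromovProd (γ 0) x (γ t)) - δ ≤ gromovProd (γ 0) x (γ u) ∧
      min u (gromovProd (γ 0) x (γ u)) - δ ≤ gromovProd (γ 0) x (γ t) := by
  have h0t : 0 ≤ t := h0.trans hut
  obtain ⟨α, hα⟩ := hgeo (γ 0) x
  obtain ⟨β, hβ⟩ := hgeo x (γ t)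
  have hray : IsGeodesicFromTo γ (γ 0) (γ t) := ray_geod hγ h0t
  have hdqt : dist (γ 0) (γ t) = t := ray_dist0 hγ h0t
  have hdqu : dist (γ 0) (γ u) = u := ray_dist0 hγ h0
  have hdut : dist (γ u) (γ t) = t - u := by
    rw [hγ u t h0 h0t, abs_of_nonpos (by linarith)]; ring
  obtain ⟨w, hw, hdw⟩ := hδ (γ 0) x (γ t) α β γ hα hβ hray u (by rw [hdqt]; exact ⟨h0, hut⟩)
  have hgpu : gromovProd (γ 0) x (γ u) = (dist (γ 0) x + u - dist x (γ u)) / 2 := by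
    rw [gromovProd, hdqu]
  have hgpt : gromovProd (γ 0) x (γ t) = (dist (γ 0) x + t - dist x (γ t)) / 2 := by
    rw [gromovProd, hdqt]
  rcases hw with ⟨r, hr, rfl⟩ | ⟨r, hr, rfl⟩
  · -- w on the geodesic from γ 0 to x
    have h1 : dist (γ 0) (α r) = r := geod_dist_left hα hr
    have h2 : dist (α r) x = dist (γ 0) x - r := geod_dist_right hα hr
    have h3 : u ≤ r + δ := by
      have h4 := dist_triangle (γ 0) (α r) (γ u)
      rw [h1, hdqu] at h4
      rw [dist_comm (α r) (γ u)] at h4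
      linarith
    have h4 : dist x (γ u) ≤ dist (γ 0) x - r + δ := by
      have h5 := dist_triangle x (α r) (γ u)
      rw [dist_comm x (α r), h2] at h5
      rw [dist_comm (α r) (γ u)] at h5
      linarith
    have h5 : dist x (γ t) ≤ dist (γ 0) x - r + δ + (t - u) := by
      have h6 := dist_triangle x (γ u) (γ t)
      rw [hdut] at h6
      linarith
    constructor
    · calc min u (gromovProd (γ 0) x (γ t)) - δ ≤ u - δ := by
            linarith [min_le_left u (gromovProd (γ 0) x (γ t))]
        _ ≤ gromovProd (γ 0) x (γ u) := by rw [hgpu]; linarith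
    · calc min u (gromovProd (γ 0) x (γ u)) - δ ≤ u - δ := by
            linarith [min_le_left u (gromovProd (γ 0) x (γ u))]
        _ ≤ gromovProd (γ 0) x (γ t) := by rw [hgpt]; linarith
  · -- w on the geodesic from x to γ t
    have h1 : dist x (β r) = r := geod_dist_left hβ hr
    have h2 : dist (β r) (γ t) = dist x (γ t) - r := geod_dist_right hβ hr
    have h3 : dist x (γ u) ≤ r + δ := by
      have h4 := dist_triangle x (β r) (γ u)
      rw [h1, dist_comm (β r) (γ u)] at h4
      linarith
    have h4 : t - u ≤ δ + (dist x (γ t) - r) := by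
      have h5 := dist_triangle (γ u) (β r) (γ t)
      rw [h2, hdut] at h5
      linarith
    have h5 : dist x (γ t) ≤ r + (δ + (t - u)) := by
      have h6 := dist_triangle (β r) (γ u) (γ t)
      rw [hdut, dist_comm (β r) (γ u)] at h6
      have h7 := dist_triangle x (β r) (γ t)
      rw [h1] at h7
      linarith
    have h3b : r - δ ≤ dist x (γ u) := by
      have h6 := dist_triangle x (γ u) (β r)
      rw [h1] at h6
      linarith
    constructor
    · calc min u (gromovProd (γ 0) x (γ t)) - δ ≤ gromovProd (γ 0) x (γ t) - δ := by
            linarith [min_le_right u (gromovProd (γ 0) x (γ t))]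
        _ ≤ gromovProd (γ 0) x (γ u) := by rw [hgpu, hgpt]; linarith
    · calc min u (gromovProd (γ 0) x (γ u)) - δ ≤ gromovProd (γ 0) x (γ u) - δ := by
            linarith [min_le_right u (gromovProd (γ 0) x (γ u))]
        _ ≤ gromovProd (γ 0) x (γ t) := by rw [hgpu, hgpt]; linarith

/-- A point with small Gromov product w.r.t. a deep point `w` lies near the ray. -/
lemma point_near_ray {δ : ℝ} (hδ : IsDeltaHyperbolic X δ) (hgeo : IsGeodesicSpace X)
    (hγ : IsGeodesicRay γ) (y w : X) {u : ℝ} (hu : 0 ≤ u)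
    (hgp : dist (γ 0) y + δ < gromovProd (γ 0) w (γ u)) :
    ∃ s, 0 ≤ s ∧ dist y (γ s) ≤ gromovProd y (γ 0) w + 3 * δ := by
  obtain ⟨α, hα⟩ := hgeo (γ 0) w
  set r := gromovProd (γ 0) y w with hrdef
  have hr : r ∈ Icc 0 (dist (γ 0) w) := ⟨gp_nonneg _ _ _, by
    rw [hrdef, gp_comm]; exact gp_le_left _ _ _⟩
  have hz1 : dist (γ 0) (α r) = r := geod_dist_left hα hr
  have hz2 : dist (α r) w = dist (γ 0) w - r := geod_dist_right hα hr
  -- Step 1: dist y (α r) ≤ gromovProd y (γ 0) w + 2δ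
  have step1 : dist y (α r) ≤ gromovProd y (γ 0) w + 2 * δ := by
    obtain ⟨α₁, hα₁⟩ := hgeo (γ 0) y
    obtain ⟨β₁, hβ₁⟩ := hgeo y w
    obtain ⟨e, he, hde⟩ := hδ (γ 0) y w α₁ β₁ α hα₁ hβ₁ hα r hr
    have hgpy : gromovProd y (γ 0) w =
        (dist (γ 0) y + dist y w - dist (γ 0) w) / 2 := by
      rw [gromovProd, dist_comm y (γ 0)]
    rcases he with ⟨r₁, hr₁, rfl⟩ | ⟨r₂, hr₂, rfl⟩
    · have e1 : dist (γ 0) (α₁ r₁) = r₁ := geod_dist_left hα₁ hr₁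
      have e2 : dist (α₁ r₁) y = dist (γ 0) y - r₁ := geod_dist_right hα₁ hr₁
      have hde' : dist (α₁ r₁) (α r) ≤ δ := by rw [dist_comm]; exact hde
      have e3 : r - δ ≤ r₁ := by
        have h4 := dist_triangle (γ 0) (α₁ r₁) (α r)
        rw [hz1, e1] at h4
        linarith
      have e4 : dist y (α r) ≤ dist (γ 0) y - r₁ + δ := by
        have h4 := dist_triangle y (α₁ r₁) (α r)
        rw [dist_comm y (α₁ r₁), e2] at h4
        linarith
      have hgp2 : r = (dist (γ 0) y + dist (γ 0) w - dist y w) / 2 := by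
        rw [hrdef, gromovProd]
      have hdyw := dist_triangle (γ 0) y w
      rw [hgpy]; linarith
    · have e1 : dist y (β₁ r₂) = r₂ := geod_dist_left hβ₁ hr₂
      have e2 : dist (β₁ r₂) w = dist y w - r₂ := geod_dist_right hβ₁ hr₂
      have e3 : dist (γ 0) w - r - δ ≤ dist y w - r₂ := by
        have h4 := dist_triangle (α r) (β₁ r₂) w
        rw [e2, hz2] at h4
        linarith
      have e4 : dist y (α r) ≤ r₂ + δ := by
        have h4 := dist_triangle y (β₁ r₂) (α r)
        rw [e1, dist_comm (β₁ r₂) (α r)] at h4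
        linarith
      have hgp2 : r = (dist (γ 0) y + dist (γ 0) w - dist y w) / 2 := by
        rw [hrdef, gromovProd]
      rw [hgpy]; linarith
  -- Step 2: α r is δ-close to the ray
  obtain ⟨β₂, hβ₂⟩ := hgeo (γ u) w
  have hrayu : IsGeodesicFromTo γ (γ 0) (γ u) := ray_geod hγ hu
  obtain ⟨e, he, hde⟩ := hδ (γ 0) (γ u) w γ β₂ α hrayu hβ₂ hα r hr
  rcases he with ⟨s, hs, rfl⟩ | ⟨r₃, hr₃, rfl⟩
  · have hsu : dist (γ 0) (γ u) = u := ray_dist0 hγ hu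
    refine ⟨s, by rw [hsu] at hs; exact hs.1, ?_⟩
    have h4 := dist_triangle y (α r) (γ s)
    linarith
  · exfalso
    have e1 : gromovProd (γ 0) (γ u) w ≤ dist (γ 0) (β₂ r₃) := gp_le_dist_geod hβ₂ hr₃ _
    have e2 : dist (γ 0) (β₂ r₃) ≤ r + δ := by
      have h4 := dist_triangle (γ 0) (α r) (β₂ r₃)
      rw [hz1] at h4
      linarith
    have e3 : r ≤ dist (γ 0) y := by rw [hrdef]; exact gp_le_left _ _ _
    rw [gp_comm (γ 0) (γ u) w] at e1
    linarith

end BRFPAux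
end BRFPAux
section BRFPAux2

open Filter Topology Metric Set

namespace BRFPAux

variable {X : Type*} [MetricSpace X]

/-- The basic neighborhoods generating the Gromov filter. -/
def gromovSet (γ : ℝ → X) (M : ℝ) : Set X :=
  {x | M ≤ Filter.liminf (fun t : ℝ => gromovProd (γ 0) x (γ t)) Filter.atTop}

variable {γ : ℝ → X}

lemma gromovSet_anti {M M' : ℝ} (h : M ≤ M') : gromovSet γ M' ⊆ gromovSet γ M :=
  fun x hx => le_trans h hx

lemma mem_gromovFilter_iff {s : Set X} :
    s ∈ gromovFilter γ ↔ ∃ M, gromovSet γ M ⊆ s := by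
  have hdir : Directed (· ≥ ·) (fun M : ℝ => Filter.principal (gromovSet γ M)) := by
    intro a b
    exact ⟨max a b, principal_mono.2 (gromovSet_anti (le_max_left _ _)),
      principal_mono.2 (gromovSet_anti (le_max_right _ _))⟩
  rw [show (gromovFilter γ : Filter X) = ⨅ M : ℝ, Filter.principal (gromovSet γ M) from rfl,
    Filter.mem_iInf_of_directed hdir]
  simp only [Filter.mem_principal]

lemma gromovSet_mem (M : ℝ) : gromovSet γ M ∈ gromovFilter γ :=
  mem_gromovFilter_iff.2 ⟨M, subset_rfl⟩

lemma eventually_gromovFilter_iff {P : X → Prop} :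
    (∀ᶠ x in gromovFilter γ, P x) ↔ ∃ M, ∀ x ∈ gromovSet γ M, P x :=
  mem_gromovFilter_iff

/-- From membership in a `gromovSet`, an eventual lower bound on Gromov products. -/
lemma eventually_gp_ge {x : X} {M a : ℝ} (hx : x ∈ gromovSet γ M) (ha : a < M) :
    ∀ᶠ u in (atTop : Filter ℝ), a ≤ gromovProd (γ 0) x (γ u) := by
  have hb : IsBoundedUnder (· ≥ ·) (atTop : Filter ℝ)
      (fun u => gromovProd (γ 0) x (γ u)) :=
    isBoundedUnder_of ⟨0, fun u => gp_nonneg _ _ _⟩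
  have h := eventually_lt_of_lt_liminf (lt_of_lt_of_le ha hx) hb
  exact h.mono fun u hu => hu.le

lemma mem_gromovSet_of_eventually {x : X} {M : ℝ}
    (h : ∀ᶠ u in (atTop : Filter ℝ), M ≤ gromovProd (γ 0) x (γ u)) :
    x ∈ gromovSet γ M := by
  have hcb : IsCoboundedUnder (· ≥ ·) (atTop : Filter ℝ)
      (fun u => gromovProd (γ 0) x (γ u)) :=
    IsBoundedUnder.isCoboundedUnder_ge (isBoundedUnder_of ⟨dist (γ 0) x, fun u => gp_le_left _ _ _⟩)
  exact le_liminf_of_le hcb h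

lemma ray_mem_gromovSet (hγ : IsGeodesicRay γ) {M T : ℝ} (h : max M 0 ≤ T) :
    γ T ∈ gromovSet γ M := by
  have hT : 0 ≤ T := le_trans (le_max_right _ _) h
  apply mem_gromovSet_of_eventually
  filter_upwards [eventually_ge_atTop T] with u hu
  have h1 : dist (γ 0) (γ T) = T := ray_dist0 hγ hT
  have h2 : dist (γ 0) (γ u) = u := ray_dist0 hγ (hT.trans hu)
  have h3 : dist (γ T) (γ u) = u - T := by
    rw [hγ T u hT (hT.trans hu), abs_of_nonpos (by linarith)]; ring
  have : gromovProd (γ 0) (γ T) (γ u) = T := by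
    rw [gromovProd, h1, h2, h3]; ring
  rw [this]
  exact le_trans (le_max_left _ _) h

lemma tendsto_ray_gromovFilter (hγ : IsGeodesicRay γ) :
    Tendsto (fun k : ℕ => γ (k : ℝ)) atTop (gromovFilter γ) := by
  rw [gromovFilter, tendsto_iInf]
  intro M
  rw [tendsto_principal]
  filter_upwards [eventually_ge_atTop ⌈max M 0⌉₊] with k hk
  have : max M 0 ≤ (k : ℝ) := le_trans (Nat.le_ceil _) (by exact_mod_cast hk)
  exact ray_mem_gromovSet hγ this

lemma gromovFilter_neBot (hγ : IsGeodesicRay γ) : NeBot (gromovFilter γ) := by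
  rw [← Filter.forall_mem_nonempty_iff_neBot]
  intro s hs
  obtain ⟨M, hM⟩ := mem_gromovFilter_iff.1 hs
  exact ⟨γ (max M 0), hM (ray_mem_gromovSet hγ le_rfl)⟩

/-- EReal liminf lower bound from an eventual bound. -/
lemma logDil_ge {p : X} {F : X → X} {c : ℝ}
    (h : ∀ᶠ x in gromovFilter γ, c ≤ dist x p - dist (F x) p) :
    (c : EReal) ≤ logDilation p γ F :=
  le_liminf_of_le (by isBoundedDefault) (h.mono fun x hx => EReal.coe_le_coe_iff.2 hx)

lemma logDil_le_of_frequently {p : X} {F : X → X} {c : ℝ}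
    (h : ∃ᶠ x in gromovFilter γ, dist x p - dist (F x) p ≤ c) :
    logDilation p γ F ≤ (c : EReal) :=
  liminf_le_of_frequently_le' (h.mono fun x hx => EReal.coe_le_coe_iff.2 hx)

lemma eventually_of_logDil {p : X} {F : X → X} {L : ℝ}
    (hL : logDilation p γ F = (L : EReal)) {ε : ℝ} (hε : 0 < ε) :
    ∀ᶠ x in gromovFilter γ, L - ε ≤ dist x p - dist (F x) p := by
  have h1 : ((L - ε : ℝ) : EReal) <
      Filter.liminf (fun x => ((dist x p - dist (F x) p : ℝ) : EReal)) (gromovFilter γ) := by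
    rw [show Filter.liminf (fun x => ((dist x p - dist (F x) p : ℝ) : EReal)) (gromovFilter γ)
        = logDilation p γ F from rfl, hL]
    exact EReal.coe_lt_coe_iff.2 (by linarith)
  have h2 := eventually_lt_of_lt_liminf h1
  exact h2.mono fun x hx => (EReal.coe_lt_coe_iff.1 hx).le

lemma nonexpanding_iterate {f : X → X} (hf : Nonexpanding f) (n : ℕ) :
    Nonexpanding f^[n] := by
  induction n with
  | zero => intro x y; simp
  | succ n ih =>
    intro x y
    rw [Function.iterate_succ_apply', Function.iterate_succ_apply']
    exact (hf _ _).trans (ih x y)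

lemma dil_lower_bound {f : X → X} (hf : Nonexpanding f) (n : ℕ) (p x : X) :
    -(dist (f^[n] p) p) ≤ dist x p - dist (f^[n] x) p := by
  have h1 : dist (f^[n] x) p ≤ dist (f^[n] x) (f^[n] p) + dist (f^[n] p) p := dist_triangle _ _ _
  have h2 : dist (f^[n] x) (f^[n] p) ≤ dist x p := nonexpanding_iterate hf n x p
  linarith

end BRFPAux
end BRFPAux2
section BRFPAux3

open Filter Topology Metric Set

namespace BRFPAux

variable {X : Type*} [MetricSpace X]

/-- `t - d(γ 0, f^[n](γ t))`: how much `f^[n]` pulls the point `γ t` towards the base point. -/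
def iterDepth (f : X → X) (γ : ℝ → X) (n : ℕ) (t : ℝ) : ℝ :=
  t - dist (γ 0) (f^[n] (γ t))

variable {δ : ℝ} {f : X → X} {γ : ℝ → X}

lemma iterDepth_mono (hf : Nonexpanding f) (hγ : IsGeodesicRay γ) (n : ℕ) {s t : ℝ}
    (hs : 0 ≤ s) (hst : s ≤ t) : iterDepth f γ n s ≤ iterDepth f γ n t := by
  have ht : 0 ≤ t := hs.trans hst
  have h1 : dist (f^[n] (γ s)) (f^[n] (γ t)) ≤ t - s := by
    have h2 := nonexpanding_iterate hf n (γ s) (γ t)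
    rw [hγ s t hs ht, abs_of_nonpos (by linarith), neg_sub] at h2
    exact h2
  have h4 := dist_triangle (γ 0) (f^[n] (γ s)) (f^[n] (γ t))
  simp only [iterDepth]
  linarith

/-- The fundamental lower bound on the dilation quotient near the boundary point. -/
lemma eventually_dilation_lower (hδ : IsDeltaHyperbolic X δ) (hgeo : IsGeodesicSpace X)
    (hf : Nonexpanding f) (hγ : IsGeodesicRay γ) (n : ℕ) (p : X) {s : ℝ} (hs : 0 ≤ s) :
    ∀ᶠ x in gromovFilter γ,
      iterDepth f γ n s - 2 * δ - 2 * dist (γ 0) p ≤ dist x p - dist (f^[n] x) p := by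
  rw [eventually_gromovFilter_iff]
  refine ⟨s + 1, fun x hx => ?_⟩
  obtain ⟨t, hst, hgpt⟩ : ∃ t, s ≤ t ∧ s ≤ gromovProd (γ 0) x (γ t) := by
    have h1 := eventually_gp_ge hx (show s < s + 1 by linarith)
    exact ((eventually_ge_atTop s).and h1).exists
  have hgs : s - δ ≤ gromovProd (γ 0) x (γ s) := by
    have h2 := (slim_ray hδ hgeo hγ x hs hst).1
    calc s - δ = min s (gromovProd (γ 0) x (γ t)) - δ := by rw [min_eq_left hgpt]
      _ ≤ _ := h2
  have hds : dist (γ 0) (γ s) = s := ray_dist0 hγ hs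
  have h3 : dist (f^[n] x) (γ 0) ≤ dist x (γ s) + (s - iterDepth f γ n s) := by
    have h4 := dist_triangle (f^[n] x) (f^[n] (γ s)) (γ 0)
    have h5 : dist (f^[n] x) (f^[n] (γ s)) ≤ dist x (γ s) := nonexpanding_iterate hf n _ _
    have h6 : dist (f^[n] (γ s)) (γ 0) = s - iterDepth f γ n s := by
      rw [iterDepth, dist_comm]; ring
    linarith
  have h7 : gromovProd (γ 0) x (γ s) = (dist (γ 0) x + s - dist x (γ s)) / 2 := by
    rw [gromovProd, hds]
  have t1 := dist_triangle x p (γ 0)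
  have t2 := dist_triangle (f^[n] x) (γ 0) p
  rw [dist_comm p (γ 0)] at t1
  rw [dist_comm (γ 0) x] at h7
  rw [h7] at hgs
  linarith

/-- Points `f^[n] (γ t)` remain quantitatively close to the ray. -/
lemma iter_near_ray (hδ : IsDeltaHyperbolic X δ) (hgeo : IsGeodesicSpace X)
    (hf : Nonexpanding f) (hγ : IsGeodesicRay γ) (n : ℕ)
    (htd : Tendsto (fun k : ℕ => f^[n] (γ (k : ℝ))) atTop (gromovFilter γ))
    {B : ℝ} (hB : ∀ t, 0 ≤ t → iterDepth f γ n t ≤ B)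
    {t : ℝ} (ht : 0 ≤ t) :
    ∃ s, 0 ≤ s ∧ dist (f^[n] (γ t)) (γ s) ≤ (B - iterDepth f γ n t) / 2 + 3 * δ := by
  set y := f^[n] (γ t) with hy
  set M := dist (γ 0) y + δ + 2 with hM
  obtain ⟨k, hk1, hk2⟩ : ∃ k : ℕ, t ≤ (k : ℝ) ∧ f^[n] (γ (k : ℝ)) ∈ gromovSet γ M := by
    have h1 : ∀ᶠ k : ℕ in atTop, f^[n] (γ (k : ℝ)) ∈ gromovSet γ M :=
      htd.eventually (eventually_mem_set.2 (gromovSet_mem M))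
    have h2 : ∀ᶠ k : ℕ in atTop, t ≤ (k : ℝ) :=
      (eventually_ge_atTop ⌈t⌉₊).mono fun k hk =>
        le_trans (Nat.le_ceil t) (by exact_mod_cast hk)
    exact (h2.and h1).exists.imp fun k hk => ⟨hk.1, hk.2⟩
  set w := f^[n] (γ (k : ℝ)) with hw
  obtain ⟨u, hu0, hu⟩ : ∃ u, 0 ≤ u ∧ M - 1 ≤ gromovProd (γ 0) w (γ u) := by
    have h1 := eventually_gp_ge hk2 (show M - 1 < M by linarith)
    exact (((eventually_ge_atTop (0 : ℝ)).and h1).exists).imp fun u hu => ⟨hu.1, hu.2⟩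
  have hdyw : dist y w ≤ (k : ℝ) - t := by
    have h1 := nonexpanding_iterate hf n (γ t) (γ (k : ℝ))
    rw [hγ t k ht (ht.trans hk1), abs_of_nonpos (by linarith), neg_sub] at h1
    exact h1
  have hqw : dist (γ 0) w = (k : ℝ) - iterDepth f γ n (k : ℝ) := by rw [iterDepth]; ring
  have hqy : dist (γ 0) y = t - iterDepth f γ n t := by rw [iterDepth]; ring
  have hgpy : gromovProd y (γ 0) w ≤ (B - iterDepth f γ n t) / 2 := by
    rw [gromovProd, dist_comm y (γ 0), hqy, hqw]
    have h8 := hB (k : ℝ) (ht.trans hk1)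
    linarith [hdyw]
  have hcond : dist (γ 0) y + δ < gromovProd (γ 0) w (γ u) := by
    have : M - 1 = dist (γ 0) y + δ + 1 := by rw [hM]; ring
    linarith
  obtain ⟨s, hs0, hsd⟩ := point_near_ray hδ hgeo hγ y w hu0 hcond
  exact ⟨s, hs0, hsd.trans (by linarith)⟩

end BRFPAux
end BRFPAux3
section BRFPAux4

open Filter Topology Metric Set

namespace BRFPAux

variable {X : Type*} [MetricSpace X] {δ : ℝ} {f : X → X} {γ : ℝ → X}

lemma master (hδ0 : 0 ≤ δ) (hδ : IsDeltaHyperbolic X δ) (hgeo : IsGeodesicSpace X)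
    (hf : Nonexpanding f) (hγ : IsGeodesicRay γ)
    (hfin : logDilation (γ 0) γ f ≠ ⊤) (hlim : HasGeodesicLimitAt f γ γ) :
    ∃ K : ℝ, ∀ n : ℕ,
      Tendsto (fun k : ℕ => f^[n] (γ (k : ℝ))) atTop (gromovFilter γ) ∧
      ∀ t, 0 ≤ t → iterDepth f γ n t ≤ n * K := by
  have hne : logDilation (γ 0) γ f ≠ ⊥ := by
    have h1 : ((-(dist (f (γ 0)) (γ 0)) : ℝ) : EReal) ≤ logDilation (γ 0) γ f := by
      apply logDil_ge
      apply Eventually.of_forall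
      intro x
      have h2 := dil_lower_bound hf 1 (γ 0) x
      simpa using h2
    intro hbot
    rw [hbot] at h1
    exact absurd h1 (by simp)
  set L₁ := (logDilation (γ 0) γ f).toReal with hL₁
  have hcoe : logDilation (γ 0) γ f = (L₁ : EReal) := (EReal.coe_toReal hfin hne).symm
  clear_value L₁
  have hB1 : ∀ s, 0 ≤ s → iterDepth f γ 1 s ≤ L₁ + 2 * δ := by
    intro s hs
    have h1 : ((iterDepth f γ 1 s - 2 * δ - 2 * dist (γ 0) (γ 0) : ℝ) : EReal) ≤
        logDilation (γ 0) γ f := by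
      apply logDil_ge
      have h2 := eventually_dilation_lower hδ hgeo hf hγ 1 (γ 0) hs
      simpa [Function.iterate_one] using h2
    rw [hcoe] at h1
    have h3 := EReal.coe_le_coe_iff.1 h1
    rw [dist_self] at h3
    linarith
  refine ⟨L₁ + 8 * δ, ?_⟩
  intro n
  induction n with
  | zero =>
    constructor
    · simpa using tendsto_ray_gromovFilter hγ
    · intro t ht
      simp [iterDepth, ray_dist0 hγ ht]
  | succ n ih =>
    obtain ⟨ihT, ihB⟩ := ih
    set K := L₁ + 8 * δ with hK
    clear_value K
    have hgr0 : iterDepth f γ n 0 ≤ (n : ℝ) * K := ihB 0 le_rfl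
    set R := ((n : ℝ) * K - iterDepth f γ n 0) / 2 + 3 * δ + 1 with hR
    clear_value R
    have hRpos : 0 < R := by
      rw [hR]
      have h0 : 0 ≤ ((n : ℝ) * K - iterDepth f γ n 0) / 2 := by linarith
      linarith
    have hreg : ∀ k : ℕ, InGeodesicRegion γ R (f^[n] (γ (k : ℝ))) := by
      intro k
      obtain ⟨s, hs0, hsd⟩ := iter_near_ray hδ hgeo hf hγ n ihT ihB (Nat.cast_nonneg k)
      refine ⟨s, hs0, lt_of_le_of_lt hsd ?_⟩
      have hmono := iterDepth_mono hf hγ n le_rfl (Nat.cast_nonneg k)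
      rw [hR]; linarith
    have hT' : Tendsto (fun k : ℕ => f (f^[n] (γ (k : ℝ)))) atTop (gromovFilter γ) :=
      hlim γ hγ ⟨0, fun t _ => by simp⟩ R hRpos _ hreg ihT
    constructor
    · have heq : (fun k : ℕ => f^[n + 1] (γ (k : ℝ))) =
          fun k : ℕ => f (f^[n] (γ (k : ℝ))) := by
        funext k; rw [Function.iterate_succ_apply']
      rw [heq]
      exact hT'
    · intro t ht
      obtain ⟨s, hs0, hsd⟩ := iter_near_ray hδ hgeo hf hγ n ihT ihB ht
      set ρ := ((n : ℝ) * K - iterDepth f γ n t) / 2 + 3 * δ with hρ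
      clear_value ρ
      have h1 : t - iterDepth f γ n t - ρ ≤ s := by
        have h2 : dist (γ 0) (γ s) = s := ray_dist0 hγ hs0
        have h3 := dist_triangle (γ 0) (γ s) (f^[n] (γ t))
        rw [h2, dist_comm (γ s) (f^[n] (γ t))] at h3
        have h4 : dist (γ 0) (f^[n] (γ t)) = t - iterDepth f γ n t := by
          rw [iterDepth]; ring
        linarith
      have h4 : s - (L₁ + 2 * δ) ≤ dist (γ 0) (f (γ s)) := by
        have h5 := hB1 s hs0
        rw [iterDepth, Function.iterate_one] at h5
        linarith
      have h5 : dist (f (γ s)) (f^[n + 1] (γ t)) ≤ ρ := by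
        rw [Function.iterate_succ_apply']
        calc dist (f (γ s)) (f (f^[n] (γ t))) ≤ dist (γ s) (f^[n] (γ t)) := hf _ _
          _ ≤ ρ := by rw [dist_comm]; exact hsd
      have h6 : s - (L₁ + 2 * δ) - ρ ≤ dist (γ 0) (f^[n + 1] (γ t)) := by
        have h7 := dist_triangle (γ 0) (f^[n + 1] (γ t)) (f (γ s))
        rw [dist_comm (f^[n + 1] (γ t)) (f (γ s))] at h7
        linarith
      have hBn : iterDepth f γ n t ≤ (n : ℝ) * K := ihB t ht
      have hgoal : iterDepth f γ (n + 1) t ≤ (n : ℝ) * K + K := by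
        rw [iterDepth]
        rw [hK]
        rw [hρ] at h6 h1
        rw [hK] at hBn h1 h6
        linarith
      calc iterDepth f γ (n + 1) t ≤ (n : ℝ) * K + K := hgoal
        _ = ((n : ℕ) + 1 : ℕ) * K := by push_cast; ring

end BRFPAux
end BRFPAux4
section BRFPAux5

open Filter Topology Metric Set

namespace BRFPAux

variable {X : Type*} [MetricSpace X] {δ : ℝ} {f : X → X} {γ : ℝ → X}

lemma superadd (hδ : IsDeltaHyperbolic X δ) (hgeo : IsGeodesicSpace X)
    (hf : Nonexpanding f) (hγ : IsGeodesicRay γ) {K : ℝ}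
    (hmaster : ∀ n : ℕ, Tendsto (fun k : ℕ => f^[n] (γ (k : ℝ))) atTop (gromovFilter γ) ∧
      ∀ t, 0 ≤ t → iterDepth f γ n t ≤ n * K)
    (n m : ℕ) (p : X) {Ln Lm : ℝ}
    (hn : logDilation p γ (f^[n]) = (Ln : EReal))
    (hm : logDilation p γ (f^[m]) = (Lm : EReal)) :
    ((Ln + Lm : ℝ) : EReal) ≤ logDilation p γ (f^[n + m]) := by
  have hmain : ∀ ε : ℝ, 0 < ε →
      ((Ln + Lm - 2 * ε : ℝ) : EReal) ≤ logDilation p γ (f^[n + m]) := by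
    intro ε hε
    apply logDil_ge
    rw [eventually_gromovFilter_iff]
    obtain ⟨M₁, hM₁⟩ := eventually_gromovFilter_iff.1 (eventually_of_logDil hn hε)
    obtain ⟨M₂, hM₂⟩ := eventually_gromovFilter_iff.1 (eventually_of_logDil hm hε)
    set c := dist (γ 0) p with hc
    set Bm := (m : ℝ) * K with hBm
    set ρ' := (Bm - iterDepth f γ m 0) / 2 + 3 * δ with hρ'
    set L₀ := Ln + Lm - 2 * ε + dist (f^[n] p) p with hL₀
    set C₁ := 1 + c + L₀ / 2 + Bm / 2 with hC₁
    set C₃ := max (Bm + ρ') (C₁ + ρ') + δ with hC₃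
    refine ⟨max (max M₂ (M₁ + C₃)) 1, fun x hx => ?_⟩
    set M := max (max M₂ (M₁ + C₃)) 1 with hM
    have hMM₂ : M₂ ≤ M := le_trans (le_max_left M₂ (M₁ + C₃)) (le_max_left _ 1)
    have hMM₁ : M₁ + C₃ ≤ M := le_trans (le_max_right M₂ (M₁ + C₃)) (le_max_left _ 1)
    have hM1 : (1 : ℝ) ≤ M := le_max_right _ _
    have key : dist x p - dist (f^[n + m] x) p =
        (dist x p - dist (f^[m] x) p) +
          (dist (f^[m] x) p - dist (f^[n] (f^[m] x)) p) := by
      rw [Function.iterate_add_apply]; ring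
    by_cases hcase : L₀ ≤ dist x p - dist (f^[m] x) p
    · have h1 : -(dist (f^[n] p) p) ≤ dist (f^[m] x) p - dist (f^[n] (f^[m] x)) p :=
        dil_lower_bound hf n p _
      rw [key]
      rw [hL₀] at hcase
      linarith
    · push_neg at hcase
      set y := f^[m] x with hy
      have hymem : y ∈ gromovSet γ M₁ := by
        obtain ⟨t, htM, hgpt⟩ : ∃ t, M ≤ t ∧ M - 1 ≤ gromovProd (γ 0) x (γ t) := by
          have h1 := eventually_gp_ge hx (show M - 1 < M by linarith)
          exact (((eventually_ge_atTop M).and h1).exists).imp fun t ht => ⟨ht.1, ht.2⟩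
        have ht0 : (0 : ℝ) ≤ t := le_trans (by linarith) htM
        set w := f^[m] (γ t) with hw
        have hdyw : dist y w ≤ dist x (γ t) := nonexpanding_iterate hf m x (γ t)
        have hqw : dist (γ 0) w = t - iterDepth f γ m t := by rw [iterDepth]; ring
        have hgmt : iterDepth f γ m t ≤ Bm := (hmaster m).2 t ht0
        have hgm0t : iterDepth f γ m 0 ≤ iterDepth f γ m t := iterDepth_mono hf hγ m le_rfl ht0
        have hdxt : dist x (γ t) ≤ dist (γ 0) x + t - 2 * (M - 1) := by
          have h2 : gromovProd (γ 0) x (γ t) = (dist (γ 0) x + t - dist x (γ t)) / 2 := by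
            rw [gromovProd, ray_dist0 hγ ht0]
          rw [h2] at hgpt
          linarith
        have hqy : dist (γ 0) x - 2 * c - L₀ ≤ dist (γ 0) y := by
          have t1 := dist_triangle y (γ 0) p
          have t2 := dist_triangle (γ 0) p x
          have e1 : dist y (γ 0) = dist (γ 0) y := dist_comm _ _
          have e2 : dist p x = dist x p := dist_comm _ _
          have e3 : dist (γ 0) p = c := rfl
          linarith [hcase]
        have hgpyw : M - C₁ ≤ gromovProd (γ 0) y w := by
          rw [gromovProd, hqw, hC₁]
          linarith
        obtain ⟨s₀, hs₀0, hs₀d⟩ := iter_near_ray hδ hgeo hf hγ m (hmaster m).1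
          (fun t' ht' => (hmaster m).2 t' ht') ht0
        have hwd : dist w (γ s₀) ≤ ρ' := by
          refine hs₀d.trans ?_
          rw [hρ', hBm]
          linarith
        have hgpys : M - C₁ - ρ' ≤ gromovProd (γ 0) y (γ s₀) := by
          have h3 := gp_lip (γ 0) y w (γ s₀)
          linarith
        have hs₀big : M - Bm - ρ' ≤ s₀ := by
          have h2 : dist (γ 0) (γ s₀) = s₀ := ray_dist0 hγ hs₀0
          have h3 := dist_triangle (γ 0) (γ s₀) w
          rw [h2, dist_comm (γ s₀) w, hqw] at h3
          linarith
        apply mem_gromovSet_of_eventually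
        filter_upwards [eventually_ge_atTop s₀] with s hs
        have hslim := (slim_ray hδ hgeo hγ y hs₀0 hs).2
        have hmin : M - C₃ + δ ≤ min s₀ (gromovProd (γ 0) y (γ s₀)) := by
          refine le_min ?_ ?_
          · have := le_max_left (Bm + ρ') (C₁ + ρ')
            rw [hC₃]; linarith
          · have := le_max_right (Bm + ρ') (C₁ + ρ')
            rw [hC₃]; linarith
        have : M - C₃ ≤ gromovProd (γ 0) y (γ s) := by linarith
        linarith
      have h1 : Ln - ε ≤ dist y p - dist (f^[n] y) p := hM₁ y hymem
      have h2 : Lm - ε ≤ dist x p - dist y p :=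
        hM₂ x (gromovSet_anti hMM₂ hx)
      rw [key]
      linarith
  by_contra hcon
  push_neg at hcon
  obtain ⟨r, hr1, hr2⟩ := EReal.lt_iff_exists_real_btwn.1 hcon
  have hε : 0 < (Ln + Lm - r) / 2 := by
    have := EReal.coe_lt_coe_iff.1 hr2
    linarith
  have h3 := hmain _ hε
  rw [show Ln + Lm - 2 * ((Ln + Lm - r) / 2) = r by ring] at h3
  exact absurd (lt_of_le_of_lt h3 hr1) (lt_irrefl _)

/-- Upper bound for the log dilation via points on the ray. -/
lemma logDil_le (hf : Nonexpanding f) (hγ : IsGeodesicRay γ) {K : ℝ} (n : ℕ)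
    (hB : ∀ t, 0 ≤ t → iterDepth f γ n t ≤ n * K) (p : X) :
    logDilation p γ (f^[n]) ≤ ((n * K + 2 * dist (γ 0) p : ℝ) : EReal) := by
  apply logDil_le_of_frequently
  rw [Filter.frequently_iff]
  intro U hU
  obtain ⟨M, hM⟩ := mem_gromovFilter_iff.1 hU
  set T := max M 0 with hT
  have hT0 : (0 : ℝ) ≤ T := le_max_right _ _
  refine ⟨γ T, hM (ray_mem_gromovSet hγ le_rfl), ?_⟩
  have h1 : dist (γ T) p ≤ T + dist (γ 0) p := by
    have h2 := dist_triangle (γ T) (γ 0) p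
    rw [dist_comm (γ T) (γ 0), ray_dist0 hγ hT0] at h2
    linarith
  have h3 : T - iterDepth f γ n T - dist (γ 0) p ≤ dist (f^[n] (γ T)) p := by
    have h4 := dist_triangle (γ 0) p (f^[n] (γ T))
    rw [dist_comm p (f^[n] (γ T))] at h4
    have h5 : dist (γ 0) (f^[n] (γ T)) = T - iterDepth f γ n T := by rw [iterDepth]; ring
    linarith
  have h6 := hB T hT0
  linarith

/-- The log dilation of every iterate is a (finite) real number. -/
lemma logDil_real (hf : Nonexpanding f) (hγ : IsGeodesicRay γ) {K : ℝ} (n : ℕ)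
    (hB : ∀ t, 0 ≤ t → iterDepth f γ n t ≤ n * K) (p : X) :
    ∃ L : ℝ, logDilation p γ (f^[n]) = (L : EReal) := by
  have hge : ((-(dist (f^[n] p) p) : ℝ) : EReal) ≤ logDilation p γ (f^[n]) :=
    logDil_ge (Eventually.of_forall fun x => dil_lower_bound hf n p x)
  have hle := logDil_le hf hγ n hB p
  have hne_top : logDilation p γ (f^[n]) ≠ ⊤ := by
    intro h
    rw [h] at hle
    exact EReal.coe_ne_top _ (top_le_iff.1 hle)
  have hne_bot : logDilation p γ (f^[n]) ≠ ⊥ := by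
    intro h
    rw [h] at hge
    exact EReal.coe_ne_bot _ (le_bot_iff.1 hge)
  exact ⟨(logDilation p γ (f^[n])).toReal, (EReal.coe_toReal hne_top hne_bot).symm⟩

end BRFPAux
end BRFPAux5
/-- **Theorem (superadditivity of log-dilations of iterates).**
Let `X` be a proper geodesic Gromov hyperbolic metric space, `f : X → X` non-expanding,
`p ∈ X`, and `η = [γ]` a BRFP of `f`. Then the sequence `(log λ_{η,p}(f^n))_{n≥1}` is
superadditive: `log λ_{η,p}(f^{n+m}) ≥ log λ_{η,p}(f^n) + log λ_{η,p}(f^m)` for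
`n, m ≥ 1`; consequently `lim_n (1/n) log λ_{η,p}(f^n)` exists, is finite and equals
`sup_{n≥1} (1/n) log λ_{η,p}(f^n)`. -/
theorem log_dilation_superadditive
    {X : Type*} [MetricSpace X] [ProperSpace X]
    (hgeo : IsGeodesicSpace X) (hhyp : GromovHyperbolic X)
    (f : X → X) (hf : Nonexpanding f)
    (p : X) (γ : ℝ → X) (hη : IsBRFP f γ) :
    (∀ n m : ℕ, 1 ≤ n → 1 ≤ m → ∀ Ln Lm Lnm : ℝ,
      HasLogDilation p γ (f^[n]) Ln → HasLogDilation p γ (f^[m]) Lm →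
      HasLogDilation p γ (f^[n + m]) Lnm → Ln + Lm ≤ Lnm) ∧
    ∃ l : ℕ → ℝ, (∀ n : ℕ, 1 ≤ n → HasLogDilation p γ (f^[n]) (l n)) ∧
      ∃ S : ℝ, Filter.Tendsto (fun n : ℕ => l n / n) Filter.atTop (nhds S) ∧
        IsLUB {r : ℝ | ∃ n : ℕ, 1 ≤ n ∧ r = l n / n} S := by

  classical
  obtain ⟨δ, hδ0, hδ⟩ := hhyp
  obtain ⟨hγ, hfin, hlim⟩ := hη
  obtain ⟨K, hmaster⟩ := BRFPAux.master hδ0 hδ hgeo hf hγ hfin hlim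
  constructor
  · intro n m _ _ Ln Lm Lnm h1 h2 h3
    have h1' : logDilation p γ (f^[n]) = (Ln : EReal) := h1
    have h2' : logDilation p γ (f^[m]) = (Lm : EReal) := h2
    have h3' : logDilation p γ (f^[n + m]) = (Lnm : EReal) := h3
    have h4 := BRFPAux.superadd hδ hgeo hf hγ hmaster n m p h1' h2'
    rw [h3'] at h4
    exact_mod_cast h4
  · have hreal : ∀ n : ℕ, ∃ L : ℝ, logDilation p γ (f^[n]) = (L : EReal) :=
      fun n => BRFPAux.logDil_real hf hγ n (hmaster n).2 p
    choose l hl using hreal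
    have hsup : ∀ n m : ℕ, l n + l m ≤ l (n + m) := by
      intro n m
      have h4 := BRFPAux.superadd hδ hgeo hf hγ hmaster n m p (hl n) (hl m)
      rw [hl (n + m)] at h4
      exact_mod_cast h4
    have hub : ∀ n : ℕ, l n ≤ n * K + 2 * dist (γ 0) p := by
      intro n
      have h4 := BRFPAux.logDil_le hf hγ n (hmaster n).2 p
      rw [hl n] at h4
      exact_mod_cast h4
    have hcnn : (0 : ℝ) ≤ dist (γ 0) p := dist_nonneg
    set u : ℕ → ℝ := fun k => -(l k) with hu
    have hsub : Subadditive u := by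
      intro a b
      have h5 := hsup a b
      simp only [hu]
      linarith
    have hbdd : BddBelow (Set.range fun k : ℕ => u k / k) := by
      refine ⟨min 0 (-K - 2 * dist (γ 0) p), ?_⟩
      rintro x ⟨k, rfl⟩
      dsimp only
      rcases Nat.eq_zero_or_pos k with hk | hk
      · subst hk
        have h5 : u 0 / ((0 : ℕ) : ℝ) = 0 := by norm_num
        rw [h5]
        exact min_le_left _ _
      · have hk1 : (1 : ℝ) ≤ (k : ℝ) := by exact_mod_cast hk
        have hkpos : (0 : ℝ) < (k : ℝ) := by linarith
        have h5 : -K - 2 * dist (γ 0) p ≤ u k / k := by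
          rw [hu]
          dsimp only
          rw [le_div_iff₀ hkpos]
          have h6 := hub k
          nlinarith
        exact le_trans (min_le_right _ _) h5
    have htend := hsub.tendsto_lim hbdd
    have htend2 : Filter.Tendsto (fun n : ℕ => l n / n) Filter.atTop (nhds (-hsub.lim)) := by
      have heq : (fun n : ℕ => l n / n) = fun n : ℕ => -(u n / n) := by
        funext k
        rw [hu]
        dsimp only
        rw [neg_div, neg_neg]
      rw [heq]
      exact htend.neg
    refine ⟨l, fun n _ => hl n, -hsub.lim, htend2, ?_, ?_⟩
    · rintro r ⟨k, hk1, rfl⟩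
      have hkR : (0 : ℝ) < (k : ℝ) := by exact_mod_cast hk1
      have hmul : ∀ j : ℕ, 1 ≤ j → (j : ℝ) * l k ≤ l (j * k) := by
        intro j hj
        induction j, hj using Nat.le_induction with
        | base => simp
        | succ j hj ih =>
          have h6 := hsup (j * k) k
          rw [Nat.succ_mul]
          push_cast
          push_cast at ih
          linarith
      have h7 : Filter.Tendsto (fun j : ℕ => j * k) Filter.atTop Filter.atTop :=
        Filter.tendsto_atTop_mono (fun j => Nat.le_mul_of_pos_right j hk1) Filter.tendsto_id
      have hseq : Filter.Tendsto (fun j : ℕ => l (j * k) / ((j * k : ℕ) : ℝ))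
          Filter.atTop (nhds (-hsub.lim)) := by
        exact htend2.comp h7
      refine ge_of_tendsto hseq ?_
      filter_upwards [Filter.eventually_ge_atTop 1] with j hj
      have hjR : (0 : ℝ) < (j : ℝ) := by exact_mod_cast hj
      have h8 := hmul j hj
      have hjk : ((j * k : ℕ) : ℝ) = (j : ℝ) * (k : ℝ) := by push_cast; ring
      rw [hjk, div_le_div_iff₀ hkR (by positivity)]
      nlinarith [h8, hkR]
    · intro b hb
      refine le_of_tendsto htend2 ?_
      filter_upwards [Filter.eventually_ge_atTop 1] with k hk
      exact hb ⟨k, hk, rfl⟩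
end

section
/- Let (X,d) be a proper geodesic Gromov hyperbolic metric space and f : X → X a non-elliptic non-expanding map with Denjoy–Wolff point ζ ∈ ∂_G X. Then the stable dilation of f at ζ satisfies log Λ_ζ = −c(f), where c(f) is the divergence rate of f. -/
private lemma myLiminfMap {α β : Type*} (u : β → EReal) (g : α → β) (F : Filter α) :
    Filter.liminf u (Filter.map g F) = Filter.liminf (fun a => u (g a)) F := by
  rw [Filter.liminf, Filter.liminf, Filter.map_map]
  rfl

/-- **Proposition (stable dilation at the Denjoy–Wolff point).**
Let `X` be a proper geodesic Gromov hyperbolic metric space and `f : X → X` a non-elliptic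
non-expanding map with Denjoy–Wolff point `ζ = [γ] ∈ ∂_G X` (a BRFP). Then the stable
dilation of `f` at `ζ` satisfies `log Λ_ζ = −c(f)`, where `c(f)` is the divergence rate. -/
theorem stable_dilation_at_DW_eq_neg_divergence_rate
    {X : Type*} [MetricSpace X] [ProperSpace X]
    (hgeo : IsGeodesicSpace X) (hhyp : GromovHyperbolic X)
    (f : X → X) (hf : Nonexpanding f) (hne : ¬ IsElliptic f)
    (γ : ℝ → X) (hDW : IsDenjoyWolffPt f γ) (hBRFP : IsBRFP f γ)
    (c : ℝ) (hc : HasDivergenceRate f c) :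
    HasStableLogDilation (γ 0) γ f (-c) := by
  classical
  set p := γ 0 with hp
  -- iterates are non-expanding
  have hfi : ∀ n : ℕ, ∀ x y : X, dist (f^[n] x) (f^[n] y) ≤ dist x y := by
    intro n
    induction n with
    | zero => intro x y; simp
    | succ k ih =>
      intro x y
      calc dist (f^[k + 1] x) (f^[k + 1] y) = dist (f (f^[k] x)) (f (f^[k] y)) := by
            simp [Function.iterate_succ_apply']
        _ ≤ dist (f^[k] x) (f^[k] y) := hf _ _
        _ ≤ dist x y := ih x y
  set A : ℕ → ℝ := fun m => dist (f^[m] p) p with hA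
  have hAc : Filter.Tendsto (fun m : ℕ => A m / m) Filter.atTop (nhds c) := by
    simpa [hA, dist_comm] using hc p
  -- pointwise lower bound
  have hptwise : ∀ n : ℕ, ∀ x : X, -(A n) ≤ dist x p - dist (f^[n] x) p := by
    intro n x
    have h1 : dist (f^[n] x) p ≤ dist (f^[n] x) (f^[n] p) + dist (f^[n] p) p :=
      dist_triangle _ _ _
    have h2 : dist (f^[n] x) (f^[n] p) ≤ dist x p := hfi n x p
    simp only [hA]
    linarith
  have hlow : ∀ n : ℕ, ((-(A n) : ℝ) : EReal) ≤ logDilation p γ (f^[n]) := by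
    intro n
    refine Filter.le_liminf_of_le (by isBoundedDefault)
      (Filter.Eventually.of_forall fun x => ?_)
    exact_mod_cast hptwise n x
  -- upper bound via the orbit of `p`
  have horb : Filter.Tendsto (fun m : ℕ => f^[m] p) Filter.atTop (gromovFilter γ) := hDW.2 p
  have hup : ∀ n : ℕ, logDilation p γ (f^[n])
      ≤ Filter.liminf (fun m : ℕ => ((A m - A (m + n) : ℝ) : EReal)) Filter.atTop := by
    intro n
    have h1 : logDilation p γ (f^[n])
        ≤ Filter.liminf (fun x => ((dist x p - dist (f^[n] x) p : ℝ) : EReal))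
            (Filter.map (fun m : ℕ => f^[m] p) Filter.atTop) :=
      Filter.liminf_le_liminf_of_le horb
    rw [myLiminfMap] at h1
    refine h1.trans_eq ?_
    congr 1
    funext m
    have hit : f^[n] (f^[m] p) = f^[m + n] p := by
      rw [add_comm m n]
      exact (Function.iterate_add_apply f n m p).symm
    rw [hit]
  -- the key estimate : the liminf along the orbit is at most `-c*n + ε`
  have hBle : ∀ n : ℕ, 1 ≤ n → ∀ ε : ℝ, 0 < ε →
      Filter.liminf (fun m : ℕ => ((A m - A (m + n) : ℝ) : EReal)) Filter.atTop
        ≤ ((-c * n + ε : ℝ) : EReal) := by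
    intro n hn ε hε
    apply Filter.liminf_le_of_frequently_le'
    rw [Filter.frequently_atTop]
    by_contra hcon
    push_neg at hcon
    obtain ⟨M, hM⟩ := hcon
    have hkey : ∀ K : ℕ, A (M + K * n) ≤ A M + K * (c * n - ε) := by
      intro K
      induction K with
      | zero => simp
      | succ L ih =>
        have h1 := hM (M + L * n) (Nat.le_add_right _ _)
        rw [EReal.coe_lt_coe_iff] at h1
        have h2 : A (M + L * n + n) < A (M + L * n) + (c * (n : ℝ) - ε) := by linarith
        have h3 : M + (L + 1) * n = M + L * n + n := by ring
        rw [h3]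
        push_cast
        push_cast at ih
        linarith
    have hnpos : (0 : ℝ) < n := by exact_mod_cast hn
    have hφ : Filter.Tendsto (fun K : ℕ => M + K * n) Filter.atTop Filter.atTop := by
      apply Filter.tendsto_atTop_mono (f := fun K : ℕ => K) (fun K => ?_) Filter.tendsto_id
      calc K = K * 1 := (mul_one K).symm
        _ ≤ K * n := Nat.mul_le_mul_left K hn
        _ ≤ M + K * n := Nat.le_add_left _ _
    have hs : Filter.Tendsto (fun K : ℕ => dist p (f^[M + K * n] p) / ((M + K * n : ℕ) : ℝ))
        Filter.atTop (nhds c) := (hc p).comp hφ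
    set d := c * n - ε with hd
    have hnum : Filter.Tendsto (fun K : ℕ => A M / (K : ℝ) + d) Filter.atTop (nhds d) := by
      simpa using (tendsto_const_div_atTop_nhds_zero_nat (A M)).add
        (tendsto_const_nhds (x := d))
    have hden : Filter.Tendsto (fun K : ℕ => (M : ℝ) / (K : ℝ) + n) Filter.atTop
        (nhds (n : ℝ)) := by
      simpa using (tendsto_const_div_atTop_nhds_zero_nat (M : ℝ)).add
        (tendsto_const_nhds (x := (n : ℝ)))
    have htu : Filter.Tendsto
        (fun K : ℕ => (A M / (K : ℝ) + d) / ((M : ℝ) / (K : ℝ) + n)) Filter.atTop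
        (nhds (d / n)) := hnum.div hden hnpos.ne'
    have heq : (fun K : ℕ => (A M / (K : ℝ) + d) / ((M : ℝ) / (K : ℝ) + n))
        =ᶠ[Filter.atTop] fun K : ℕ => (A M + K * d) / ((M : ℝ) + K * n) := by
      filter_upwards [Filter.eventually_ge_atTop 1] with K hK
      have hK0 : (K : ℝ) ≠ 0 := by
        have : (0 : ℝ) < K := by exact_mod_cast hK
        exact this.ne'
      have hden2 : (0 : ℝ) < (M : ℝ) + K * n := by
        have h1 : (1 : ℝ) ≤ (K : ℝ) * n := by
          have : 1 * 1 ≤ K * n := Nat.mul_le_mul hK hn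
          exact_mod_cast this
        positivity
      field_simp
    have ht : Filter.Tendsto (fun K : ℕ => (A M + K * d) / ((M : ℝ) + K * n))
        Filter.atTop (nhds (d / n)) := htu.congr' heq
    have hle : (fun K : ℕ => dist p (f^[M + K * n] p) / ((M + K * n : ℕ) : ℝ))
        ≤ᶠ[Filter.atTop] fun K : ℕ => (A M + K * d) / ((M : ℝ) + K * n) := by
      filter_upwards [Filter.eventually_ge_atTop 1] with K hK
      have hden2 : (0 : ℝ) < (M : ℝ) + K * n := by
        have h1 : (1 : ℝ) ≤ (K : ℝ) * n := by
          have : 1 * 1 ≤ K * n := Nat.mul_le_mul hK hn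
          exact_mod_cast this
        positivity
      have hcast : ((M + K * n : ℕ) : ℝ) = (M : ℝ) + K * n := by push_cast; ring
      rw [hcast, dist_comm]
      have hnum2 : dist (f^[M + K * n] p) p ≤ A M + K * d := hkey K
      exact (div_le_div_iff_of_pos_right hden2).2 hnum2
    have hcd : c ≤ d / n := le_of_tendsto_of_tendsto hs ht hle
    have hcontr : c * n ≤ d := (le_div_iff₀ hnpos).1 hcd
    rw [hd] at hcontr
    linarith
  -- assemble
  set l : ℕ → ℝ := fun n => (logDilation p γ (f^[n])).toReal with hl
  have hfin : ∀ n : ℕ, 1 ≤ n → logDilation p γ (f^[n]) = ((l n : ℝ) : EReal)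
      ∧ -(A n) ≤ l n ∧ l n ≤ -c * n := by
    intro n hn
    have h1 := hlow n
    have h2 : logDilation p γ (f^[n]) ≤ ((-c * n + 1 : ℝ) : EReal) :=
      (hup n).trans (hBle n hn 1 one_pos)
    have hne_top : logDilation p γ (f^[n]) ≠ ⊤ := by
      intro h
      rw [h] at h2
      exact (EReal.coe_lt_top _).not_ge h2
    have hne_bot : logDilation p γ (f^[n]) ≠ ⊥ := by
      intro h
      rw [h] at h1
      exact (EReal.bot_lt_coe _).not_ge h1
    have hcoe : ((l n : ℝ) : EReal) = logDilation p γ (f^[n]) :=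
      EReal.coe_toReal hne_top hne_bot
    refine ⟨hcoe.symm, ?_, ?_⟩
    · rw [← hcoe] at h1
      exact_mod_cast h1
    · by_contra hlt
      push_neg at hlt
      have hε : 0 < (l n + c * n) / 2 := by linarith
      have h3 : logDilation p γ (f^[n]) ≤ ((-c * n + (l n + c * n) / 2 : ℝ) : EReal) :=
        (hup n).trans (hBle n hn _ hε)
      rw [← hcoe, EReal.coe_le_coe_iff] at h3
      linarith
  refine ⟨l, fun n hn => (hfin n hn).1, ?_⟩
  have hlow' : Filter.Tendsto (fun n : ℕ => -(A n) / n) Filter.atTop (nhds (-c)) := by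
    have := hAc.neg
    simpa [neg_div] using this
  apply tendsto_of_tendsto_of_tendsto_of_le_of_le' hlow'
    (tendsto_const_nhds (x := (-c : ℝ)))
  · filter_upwards [Filter.eventually_ge_atTop 1] with n hn
    have hnpos : (0 : ℝ) < n := by exact_mod_cast hn
    exact (div_le_div_iff_of_pos_right hnpos).2 (hfin n hn).2.1
  · filter_upwards [Filter.eventually_ge_atTop 1] with n hn
    have hnpos : (0 : ℝ) < n := by exact_mod_cast hn
    have h := (div_le_div_iff_of_pos_right hnpos).2 (hfin n hn).2.2
    rwa [mul_div_assoc, div_self hnpos.ne', mul_one] at h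
end
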